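/- arXiv:math/0505332 — 6 statements merged into one kernel-verified Lean document; each statement's English description precedes it below -/
import Mathlib

section
/- Assume c := sup_{m≥1} P(S_m < 0) < 1. Then for every integer n ≥ 1 and every real x > 0: P(max_{0≤k≤n} S_k ≥ x) ≤ (1/(1−c))·P(S_n ≥ x). -/
/-!
Split the event `max_{k ≤ n} S_k ≥ x` according to the first index `k` with `S_k ≥ x`. The event
of first passage at `k` is determined by `ξ_1, …, ξ_k` and hence independent of `S_n - S_k`, which
has the law of `S_{n-k}`, so `P(S_n - S_k ≥ 0) ≥ 1 - c`. On the intersection `S_n ≥ x`, and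
summing the disjoint intersections over `k` gives `(1 - c) P(max_{k ≤ n} S_k ≥ x) ≤ P(S_n ≥ x)`.
-/

open MeasureTheory ProbabilityTheory Filter

noncomputable section

/-- The random walk `S_n = ξ₁ + ⋯ + ξ_n` associated with the steps `ξ`. -/
def walk {Ω : Type*} (ξ : ℕ → Ω → ℝ) (n : ℕ) (ω : Ω) : ℝ :=
  ∑ i ∈ Finset.range n, ξ i ω

/-- `max_{0 ≤ k ≤ n} S_k`. -/
def walkMax {Ω : Type*} (ξ : ℕ → Ω → ℝ) (n : ℕ) (ω : Ω) : ℝ :=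
  (Finset.range (n + 1)).sup' Finset.nonempty_range_add_one fun k => walk ξ k ω

open scoped ENNReal

section

variable {Ω : Type*}

lemma ProbabilityTheory.iIndepFun.measure_inter_eq_mul_of_disjoint {ι β : Type*}
    [MeasurableSpace Ω] [mβ : MeasurableSpace β] {μ : Measure Ω} {f : ι → Ω → β}
    (hf : ∀ i, Measurable (f i)) (h : iIndepFun f μ) {S T : Set ι} (hST : Disjoint S T) {A B : Set Ω}
    (hA : MeasurableSet[⨆ i ∈ S, mβ.comap (f i)] A)
    (hB : MeasurableSet[⨆ i ∈ T, mβ.comap (f i)] B) :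
    μ (A ∩ B) = μ A * μ B :=
  (Indep_iff _ _ μ).1 (indep_iSup_of_disjoint (fun i => (hf i).comap_le) h.iIndep hST) A B hA hB

lemma ofReal_one_sub_le_measure_nonneg [MeasurableSpace Ω] {P : Measure Ω}
    [IsProbabilityMeasure P] {Y : Ω → ℝ} (hY : Measurable Y) {c : ℝ}
    (hc : (P {ω | Y ω < 0}).toReal ≤ c) :
    ENNReal.ofReal (1 - c) ≤ P {ω | 0 ≤ Y ω} := by
  have hcompl : {ω | 0 ≤ Y ω} = {ω | Y ω < 0}ᶜ := by
    ext ω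
    simp
  rw [hcompl, prob_compl_eq_one_sub (measurableSet_lt hY measurable_const),
    ← ENNReal.ofReal_toReal (measure_ne_top P {ω | Y ω < 0}), ← ENNReal.ofReal_one,
    ← ENNReal.ofReal_sub _ ENNReal.toReal_nonneg]
  exact ENNReal.ofReal_le_ofReal (by linarith)

lemma walk_add (ξ : ℕ → Ω → ℝ) (k m : ℕ) (ω : Ω) :
    walk ξ (k + m) ω = walk ξ k ω + walk (fun i => ξ (k + i)) m ω :=
  Finset.sum_range_add _ k m

lemma ProbabilityTheory.IdentDistrib.walk {Ω' : Type*} [MeasurableSpace Ω]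
    [MeasurableSpace Ω'] {μ : Measure Ω} {ν : Measure Ω'} {ξ : ℕ → Ω → ℝ} {η : ℕ → Ω' → ℝ}
    (h : ∀ i, IdentDistrib (ξ i) (η i) μ ν) (hξ : iIndepFun ξ μ) (hη : iIndepFun η ν) (m : ℕ) :
    IdentDistrib (walk ξ m) (walk η m) μ ν :=
  (IdentDistrib.pi h hξ hη).comp
    (Finset.measurable_sum (Finset.range m) fun i _ => measurable_pi_apply i)

lemma measurable_walk_iSup_comap (ξ : ℕ → Ω → ℝ) {S : Set ℕ} {g : ℕ → ℕ} {m : ℕ}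
    (hg : ∀ i < m, g i ∈ S) :
    Measurable[⨆ i ∈ S, MeasurableSpace.comap (ξ i) inferInstance] (walk (fun i => ξ (g i)) m) :=
  Finset.measurable_sum _ fun i hi =>
    measurable_iff_comap_le.2 <|
      le_iSup₂ (f := fun i (_ : i ∈ S) => MeasurableSpace.comap (ξ i) inferInstance) (g i)
        (hg i (Finset.mem_range.1 hi))

def firstPassage (ξ : ℕ → Ω → ℝ) (x : ℝ) (k : ℕ) : Set Ω :=
  {ω | x ≤ walk ξ k ω ∧ ∀ j < k, walk ξ j ω < x}

open Function in
lemma pairwise_disjoint_firstPassage (ξ : ℕ → Ω → ℝ) (x : ℝ) :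
    Pairwise (Disjoint on firstPassage ξ x) := by
  refine pairwise_disjoint_on _ |>.2 fun k l hkl => Set.disjoint_left.2 ?_
  rintro ω ⟨hk, -⟩ ⟨-, hl⟩
  exact (hl k hkl).not_ge hk

lemma setOf_le_walkMax_eq_biUnion_firstPassage (ξ : ℕ → Ω → ℝ) (x : ℝ) (n : ℕ) :
    {ω | x ≤ walkMax ξ n ω} = ⋃ k ∈ Finset.range (n + 1), firstPassage ξ x k := by
  ext ω
  simp only [Set.mem_ofPred_eq, walkMax, Finset.le_sup'_iff, Finset.mem_range, Set.mem_iUnion,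
    exists_prop, firstPassage]
  constructor
  · rintro ⟨k, hk, hxk⟩
    have hex : ∃ k, x ≤ walk ξ k ω := ⟨k, hxk⟩
    exact ⟨Nat.find hex, (Nat.find_min' hex hxk).trans_lt hk, Nat.find_spec hex,
      fun j hj => not_le.1 (Nat.find_min hex hj)⟩
  · rintro ⟨k, hk, hxk, -⟩
    exact ⟨k, hk, hxk⟩

lemma measurableSet_firstPassage_iSup_comap (ξ : ℕ → Ω → ℝ) (x : ℝ) (k : ℕ) :
    MeasurableSet[⨆ i ∈ Set.Iio k, MeasurableSpace.comap (ξ i) inferInstance]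
      (firstPassage ξ x k) := by
  have hwalk : ∀ j ≤ k, Measurable[⨆ i ∈ Set.Iio k, MeasurableSpace.comap (ξ i) inferInstance]
      (walk ξ j) := fun j hj =>
    measurable_walk_iSup_comap ξ (g := id) fun i hi => hi.trans_le hj
  simp only [firstPassage, Set.ofPred_and, Set.ofPred_forall]
  exact (measurableSet_le measurable_const (hwalk k le_rfl)).inter <|
    MeasurableSet.iInter fun j => MeasurableSet.iInter fun hj =>
      measurableSet_lt (hwalk j hj.le) measurable_const

theorem mul_measure_le_walkMax_le_measure_le_walk [MeasurableSpace Ω] {P : Measure Ω}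
    {ξ : ℕ → Ω → ℝ} (hmeas : ∀ i, Measurable (ξ i)) (hindep : iIndepFun ξ P) {x : ℝ} {n : ℕ}
    {q : ℝ≥0∞} (hq : ∀ k ≤ n, q ≤ P {ω | 0 ≤ walk (fun i => ξ (k + i)) (n - k) ω}) :
    q * P {ω | x ≤ walkMax ξ n ω} ≤ P {ω | x ≤ walk ξ n ω} := by
  set A := firstPassage ξ x
  set B : ℕ → Set Ω := fun k => {ω | 0 ≤ walk (fun i => ξ (k + i)) (n - k) ω}
  have hpast : ∀ k, MeasurableSet[⨆ i ∈ Set.Iio k, MeasurableSpace.comap (ξ i) inferInstance]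
      (A k) := measurableSet_firstPassage_iSup_comap ξ x
  have hfuture : ∀ k, MeasurableSet[⨆ i ∈ Set.Ici k, MeasurableSpace.comap (ξ i) inferInstance]
      (B k) := fun k =>
    measurableSet_le measurable_const (measurable_walk_iSup_comap ξ fun i _ => k.le_add_right i)
  have hle : ∀ S : Set ℕ, ⨆ i ∈ S, MeasurableSpace.comap (ξ i) inferInstance ≤ ‹_› :=
    fun S => iSup₂_le fun i _ => (hmeas i).comap_le
  have hAB : ∀ k ≤ n, A k ∩ B k ⊆ {ω | x ≤ walk ξ n ω} := by
    rintro k hk ω ⟨⟨hxk, -⟩, hpos⟩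
    have := walk_add ξ k (n - k) ω
    rw [Nat.add_sub_cancel' hk] at this
    simp only [Set.mem_ofPred_eq, B] at hpos ⊢
    linarith
  have hdisj := pairwise_disjoint_firstPassage ξ x
  calc q * P {ω | x ≤ walkMax ξ n ω}
      = ∑ k ∈ Finset.range (n + 1), q * P (A k) := by
        rw [setOf_le_walkMax_eq_biUnion_firstPassage,
          measure_biUnion_finset (hdisj.set_pairwise _) fun k _ => hle _ _ (hpast k),
          Finset.mul_sum]
    _ ≤ ∑ k ∈ Finset.range (n + 1), P (A k) * P (B k) :=
        Finset.sum_le_sum fun k hk => by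
          rw [mul_comm]
          gcongr
          exact hq k (Nat.lt_succ_iff.1 (Finset.mem_range.1 hk))
    _ = ∑ k ∈ Finset.range (n + 1), P (A k ∩ B k) :=
        Finset.sum_congr rfl fun k _ =>
          (hindep.measure_inter_eq_mul_of_disjoint hmeas (Set.Iio_disjoint_Ici le_rfl)
            (hpast k) (hfuture k)).symm
    _ = P (⋃ k ∈ Finset.range (n + 1), A k ∩ B k) :=
        (measure_biUnion_finset
          (fun k _ l _ hkl => (hdisj hkl).mono Set.inter_subset_left Set.inter_subset_left)
          fun k _ => (hle _ _ (hpast k)).inter (hle _ _ (hfuture k))).symm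
    _ ≤ P {ω | x ≤ walk ξ n ω} :=
        measure_mono <| Set.iUnion₂_subset fun k hk =>
          hAB k (Nat.lt_succ_iff.1 (Finset.mem_range.1 hk))

lemma toReal_measure_walk_neg_le_iSup [MeasurableSpace Ω] (P : Measure Ω)
    [IsFiniteMeasure P] (ξ : ℕ → Ω → ℝ) (m : ℕ) :
    (P {ω | walk ξ m ω < 0}).toReal ≤ ⨆ m : ℕ, (P {ω | walk ξ (m + 1) ω < 0}).toReal := by
  cases m with
  | zero =>
    simpa [walk] using Real.iSup_nonneg fun _ => ENNReal.toReal_nonneg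
  | succ m =>
    refine le_ciSup (f := fun m : ℕ => (P {ω | walk ξ (m + 1) ω < 0}).toReal)
      ⟨(P Set.univ).toReal, Set.forall_mem_range.2 fun m => ?_⟩ m
    exact ENNReal.toReal_mono (measure_ne_top _ _) (measure_mono (Set.subset_univ _))

end

theorem reflection_bound_of_sup_neg_lt_one_general
    {Ω : Type*} [MeasurableSpace Ω] (P : Measure Ω) [IsProbabilityMeasure P]
    (ξ : ℕ → Ω → ℝ) (hmeas : ∀ i, Measurable (ξ i))
    (hindep : iIndepFun ξ P)
    (hident : ∀ i, IdentDistrib (ξ i) (ξ 0) P P)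
    (c : ℝ)
    (hc_def : c = ⨆ m : ℕ, (P {ω | walk ξ (m + 1) ω < 0}).toReal)
    (hc : c < 1)
    (n : ℕ) (x : ℝ) :
    (P {ω | x ≤ walkMax ξ n ω}).toReal
      ≤ (1 / (1 - c)) * (P {ω | x ≤ walk ξ n ω}).toReal := by
  have hq : ∀ k ≤ n, ENNReal.ofReal (1 - c) ≤
      P {ω | 0 ≤ walk (fun i => ξ (k + i)) (n - k) ω} := fun k _ => by
    have hlaw : P {ω | walk (fun i => ξ (k + i)) (n - k) ω < 0} = P {ω | walk ξ (n - k) ω < 0} :=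
      (IdentDistrib.walk (fun i => (hident (k + i)).trans (hident i).symm)
        (hindep.precomp (add_right_injective k)) hindep (n - k)).measure_mem_eq
        (s := Set.Iio 0) measurableSet_Iio
    refine ofReal_one_sub_le_measure_nonneg (Y := walk (fun i => ξ (k + i)) (n - k))
      (Finset.measurable_sum _ fun i _ => hmeas _) ?_
    rw [hlaw, hc_def]
    exact toReal_measure_walk_neg_le_iSup P ξ (n - k)
  have hbound := ENNReal.toReal_mono (measure_ne_top _ _)
    (mul_measure_le_walkMax_le_measure_le_walk hmeas hindep (x := x) hq)
  have h1c : 0 < 1 - c := by linarith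
  rw [ENNReal.toReal_mul, ENNReal.toReal_ofReal h1c.le] at hbound
  rw [one_div_mul_eq_div, le_div_iff₀ h1c, mul_comm]
  exact hbound

/-- If `c := sup_{m ≥ 1} P(S_m < 0) < 1`, then for every `n ≥ 1` and
`x > 0`, `P(max_{0 ≤ k ≤ n} S_k ≥ x) ≤ (1/(1-c)) ⬝ P(S_n ≥ x)`. -/
theorem reflection_bound_of_sup_neg_lt_one
    {Ω : Type*} [MeasurableSpace Ω] (P : Measure Ω) [IsProbabilityMeasure P]
    (ξ : ℕ → Ω → ℝ) (hmeas : ∀ i, Measurable (ξ i))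
    (hindep : iIndepFun ξ P)
    (hident : ∀ i, IdentDistrib (ξ i) (ξ 0) P P)
    (c : ℝ)
    (hc_def : c = ⨆ m : ℕ, (P {ω | walk ξ (m + 1) ω < 0}).toReal)
    (hc : c < 1)
    (n : ℕ) (hn : 1 ≤ n) (x : ℝ) (hx : 0 < x) :
    (P {ω | x ≤ walkMax ξ n ω}).toReal
      ≤ (1 / (1 - c)) * (P {ω | x ≤ walk ξ n ω}).toReal :=
  reflection_bound_of_sup_neg_lt_one_general P ξ hmeas hindep hident c hc_def hc n x
end
end

section
/- Let (H_i)_{i≥1} be an i.i.d. sequence of nonnegative real-valued random variables and let Σ_n = H_1 + ⋯ + H_n. Let c : [1,∞) → (0,∞) be a continuous, strictly increasing function with c(x) → ∞ as x → ∞, and suppose that Σ_n/c(n) converges in probability to a constant κ ∈ (0,∞) as n → ∞. Let L(λ) = E[exp(−λ H₁)] denote the Laplace transform of H₁. Then 1 − L(1/x) is asymptotically equivalent to κ/c⁻¹(x) as x → ∞, i.e. lim_{x→∞} c⁻¹(x)·(1 − L(1/x)) = κ, where c⁻¹ denotes the inverse function of c. -/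
/-!
Write `L(λ) = mgf (H 0) P (-λ)`. By independence, `E[exp (-Σ_n / c n)] = L(1 / c n) ^ n`, and since
`Σ_n / c n → κ` in probability and `exp ∘ neg` is bounded and continuous on `[0, ∞)`, this tends to
`exp (-κ)`. Taking logarithms, `n (1 - L(1 / c n)) → κ`. As `t ↦ 1 - L(1 / c t)` is antitone, the
limit along the integers extends to real `t → ∞`, and substituting `t = c⁻¹ x` gives the theorem.
-/

open MeasureTheory ProbabilityTheory Filter Real Set Topology
open scoped BoundedContinuousFunction

section ConvergenceInMeasure

variable {ι Ω E : Type*} [MeasurableSpace Ω] {P : Measure Ω} [IsProbabilityMeasure P]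
  {l : Filter ι} [l.IsCountablyGenerated] [l.NeBot]

lemma MeasureTheory.TendstoInMeasure.tendsto_integral_boundedContinuous [PseudoEMetricSpace E]
    [MeasurableSpace E] [BorelSpace E] {X : ι → Ω → E} {Z : Ω → E}
    (h : TendstoInMeasure P X l Z) (hX : ∀ i, AEMeasurable (X i) P) (f : E →ᵇ ℝ) :
    Tendsto (fun i ↦ ∫ ω, f (X i ω) ∂P) l (𝓝 (∫ ω, f (Z ω) ∂P)) := by
  have hd := h.tendstoInDistribution hX
  have := ProbabilityMeasure.tendsto_iff_forall_integral_tendsto.1 hd.tendsto f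
  simp only [ProbabilityMeasure.coe_mk] at this
  rw [integral_map hd.aemeasurable_limit f.continuous.aestronglyMeasurable] at this
  exact this.congr fun i ↦ integral_map (hX i) f.continuous.aestronglyMeasurable

lemma MeasureTheory.TendstoInMeasure.tendsto_integral_exp_neg {Y : ι → Ω → ℝ} {κ : ℝ}
    (h : TendstoInMeasure P Y l fun _ ↦ κ) (hY : ∀ i, AEMeasurable (Y i) P)
    (hY_nonneg : ∀ᶠ i in l, 0 ≤ᵐ[P] Y i) (hκ : 0 ≤ κ) :
    Tendsto (fun i ↦ ∫ ω, exp (-Y i ω) ∂P) l (𝓝 (exp (-κ))) := by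
  let f : ℝ →ᵇ ℝ := .ofNormedAddCommGroup (fun y ↦ exp (-max y 0)) (by fun_prop) 1
    fun y ↦ by simp [abs_of_pos (exp_pos _)]
  have hf := h.tendsto_integral_boundedContinuous hY f
  simp only [f, BoundedContinuousFunction.coe_ofNormedAddCommGroup, integral_const,
    probReal_univ, one_smul, max_eq_left hκ] at hf
  refine hf.congr' ?_
  filter_upwards [hY_nonneg] with i hi
  exact integral_congr_ae (by filter_upwards [hi] with ω hω using by rw [max_eq_left (b := 0) hω])

end ConvergenceInMeasure

section MgfOfNonneg

variable {Ω : Type*} [MeasurableSpace Ω] {μ : Measure Ω} {X : Ω → ℝ} {t : ℝ}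

lemma integrable_exp_mul_of_nonneg_of_nonpos [IsFiniteMeasure μ] (hXm : AEMeasurable X μ)
    (hX : 0 ≤ᵐ[μ] X) (ht : t ≤ 0) : Integrable (fun ω ↦ exp (t * X ω)) μ := by
  refine .of_mem_Icc 0 1 (measurable_exp.comp_aemeasurable (hXm.const_mul t)) ?_
  filter_upwards [hX] with ω hω
  exact ⟨(exp_pos _).le, exp_le_one_iff.2 (mul_nonpos_of_nonpos_of_nonneg ht hω)⟩

lemma mgf_le_one_of_nonneg_of_nonpos [IsProbabilityMeasure μ] (hX : 0 ≤ᵐ[μ] X) (ht : t ≤ 0) :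
    mgf X μ t ≤ 1 := by
  simpa using mgf_anti_of_nonpos hX ht (by simp)

lemma mgf_monotoneOn_of_nonneg [IsFiniteMeasure μ] (hXm : AEMeasurable X μ) (hX : 0 ≤ᵐ[μ] X) :
    MonotoneOn (mgf X μ) (Iic 0) := by
  intro s hs t ht hst
  refine integral_mono_ae (integrable_exp_mul_of_nonneg_of_nonpos hXm hX hs)
    (integrable_exp_mul_of_nonneg_of_nonpos hXm hX ht) ?_
  filter_upwards [hX] with ω hω
  exact exp_le_exp.2 (mul_le_mul_of_nonneg_right hst hω)

end MgfOfNonneg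

lemma mgf_sum_range_of_identDistrib {Ω : Type*} [MeasurableSpace Ω] {μ : Measure Ω}
    {X : ℕ → Ω → ℝ} (hX : ∀ i, Measurable (X i)) (hindep : iIndepFun X μ)
    (hident : ∀ i, IdentDistrib (X i) (X 0) μ μ) (n : ℕ) (t : ℝ) :
    mgf (∑ i ∈ Finset.range n, X i) μ t = mgf (X 0) μ t ^ n := by
  rw [hindep.mgf_sum hX, Finset.prod_congr rfl fun i _ ↦
    mgf_congr_of_identDistrib _ _ (hident i) t, Finset.prod_const, Finset.card_range]

lemma tendsto_natCast_mul_one_sub_of_tendsto_pow {a : ℕ → ℝ} {κ : ℝ}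
    (ha : ∀ᶠ n in atTop, 0 < a n) (h : Tendsto (fun n ↦ a n ^ n) atTop (𝓝 (exp (-κ)))) :
    Tendsto (fun n : ℕ ↦ n * (1 - a n)) atTop (𝓝 κ) := by
  have hlog : Tendsto (fun n : ℕ ↦ n * -log (a n)) atTop (𝓝 κ) := by
    have := ((continuousAt_log (exp_pos _).ne').tendsto.comp h).neg
    simpa [Function.comp_def, log_pow] using this
  have ha_one : Tendsto a atTop (𝓝 1) := by
    have hlog_zero : Tendsto (fun n : ℕ ↦ log (a n)) atTop (𝓝 0) := by
      have := (hlog.mul tendsto_inv_atTop_nhds_zero_nat).neg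
      rw [mul_zero, neg_zero] at this
      refine this.congr' ?_
      filter_upwards [eventually_ne_atTop 0] with n hn
      field_simp
    simpa using ((continuous_exp.tendsto 0).comp hlog_zero).congr' <| by
      filter_upwards [ha] with n hn using exp_log hn
  -- `a (-log a) ≤ 1 - a ≤ -log a` for `a > 0`.
  refine tendsto_of_tendsto_of_tendsto_of_le_of_le'
    (by simpa only [mul_one] using hlog.mul ha_one) hlog ?_ ?_
  · filter_upwards [ha] with n hn
    have hinv := one_sub_inv_le_log_of_pos hn
    have hle : a n * -log (a n) ≤ 1 - a n := by nlinarith [mul_inv_cancel₀ hn.ne']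
    calc (n : ℝ) * -log (a n) * a n = n * (a n * -log (a n)) := by ring
      _ ≤ n * (1 - a n) := by gcongr
  · filter_upwards [ha] with n hn
    gcongr
    linarith [log_le_sub_one_of_pos hn]

lemma tendsto_mul_of_antitoneOn_of_tendsto_natCast_mul {φ : ℝ → ℝ} {κ : ℝ}
    (hφ : AntitoneOn φ (Ici 1)) (hφ_nonneg : ∀ t, 1 ≤ t → 0 ≤ φ t)
    (h : Tendsto (fun n : ℕ ↦ n * φ n) atTop (𝓝 κ)) :
    Tendsto (fun t ↦ t * φ t) atTop (𝓝 κ) := by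
  have hφ_zero : Tendsto (fun n : ℕ ↦ φ n) atTop (𝓝 0) := by
    refine (by simpa using h.mul tendsto_inv_atTop_nhds_zero_nat :
      Tendsto (fun n : ℕ ↦ n * φ n * (n : ℝ)⁻¹) atTop (𝓝 0)).congr' ?_
    filter_upwards [eventually_ne_atTop 0] with n hn
    field_simp
  have hlower : Tendsto (fun n : ℕ ↦ n * φ (n + 1)) atTop (𝓝 κ) := by
    have := (h.comp (tendsto_add_atTop_nat 1)).sub (hφ_zero.comp (tendsto_add_atTop_nat 1))
    rw [sub_zero] at this
    exact this.congr fun n ↦ by simp only [Function.comp_apply]; push_cast; ring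
  have hupper : Tendsto (fun n : ℕ ↦ (n + 1) * φ n) atTop (𝓝 κ) := by
    simpa [add_mul] using h.add hφ_zero
  -- With `n = ⌊t⌋₊`: `n φ (n + 1) ≤ t φ t ≤ (n + 1) φ n`.
  refine tendsto_of_tendsto_of_tendsto_of_le_of_le' (hlower.comp tendsto_nat_floor_atTop)
    (hupper.comp tendsto_nat_floor_atTop) ?_ ?_ <;>
    filter_upwards [eventually_ge_atTop 1] with t ht
  all_goals
    have h1 : (1 : ℝ) ≤ ⌊t⌋₊ := by exact_mod_cast Nat.le_floor (by exact_mod_cast ht)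
    have hfloor : (⌊t⌋₊ : ℝ) ≤ t := Nat.floor_le (by linarith)
    have hceil : t ≤ ⌊t⌋₊ + 1 := (Nat.lt_floor_add_one t).le
  · exact mul_le_mul hfloor (hφ ht (by simp only [mem_Ici]; linarith) hceil)
      (hφ_nonneg _ (by linarith)) (by linarith)
  · exact mul_le_mul hceil (hφ h1 ht hfloor) (hφ_nonneg t ht) (by linarith)

lemma tendsto_atTop_of_leftInvOn {c cinv : ℝ → ℝ} {a : ℝ} (hc_cont : ContinuousOn c (Ici a))
    (hc_top : Tendsto c atTop atTop) (hcinv : LeftInvOn cinv c (Ici a)) :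
    Tendsto cinv atTop atTop := by
  refine tendsto_atTop.2 fun b ↦ ?_
  filter_upwards [eventually_ge_atTop (c (max a b))] with x hx
  obtain ⟨M, hxM, hM⟩ := ((hc_top.eventually_ge_atTop x).and (eventually_ge_atTop (max a b))).exists
  obtain ⟨y, hy, rfl⟩ := intermediate_value_Icc hM
    (hc_cont.mono fun y hy ↦ (le_max_left a b).trans hy.1) ⟨hx, hxM⟩
  rw [hcinv ((le_max_left a b).trans hy.1)]
  exact (le_max_right a b).trans hy.1

/-- Let `(H_i)` be an i.i.d. sequence of nonnegative random variables with
partial sums `Σ_n`, let `c : [1,∞) → (0,∞)` be continuous, strictly increasing and tending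
to `∞`, and suppose `Σ_n / c(n) → κ ∈ (0,∞)` in probability.  If `L(λ) = E[exp(-λ H₁)]` is
the Laplace transform of `H₁`, then `1 - L(1/x) ∼ κ / c⁻¹(x)` as `x → ∞`, i.e.
`c⁻¹(x) ⬝ (1 - L(1/x)) → κ`. -/
theorem one_sub_laplace_asymptotic
    {Ω : Type*} [MeasurableSpace Ω] (P : Measure Ω) [IsProbabilityMeasure P]
    (H : ℕ → Ω → ℝ) (hmeas : ∀ i, Measurable (H i))
    (hnonneg : ∀ i ω, 0 ≤ H i ω)
    (hindep : iIndepFun H P)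
    (hident : ∀ i, IdentDistrib (H i) (H 0) P P)
    (c cinv : ℝ → ℝ)
    (hc_cont : ContinuousOn c (Set.Ici 1))
    (hc_mono : StrictMonoOn c (Set.Ici 1))
    (hc_pos : ∀ x : ℝ, 1 ≤ x → 0 < c x)
    (hc_top : Tendsto c atTop atTop)
    (hcinv_left : ∀ x : ℝ, 1 ≤ x → cinv (c x) = x)
    (hcinv_right : ∀ y : ℝ, c 1 ≤ y → c (cinv y) = y)
    (κ : ℝ) (hκ : 0 < κ)
    (hprob : ∀ ε : ℝ, 0 < ε →
      Tendsto (fun n : ℕ =>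
          (P {ω | ε ≤ |(∑ i ∈ Finset.range n, H i ω) / c n - κ|}).toReal)
        atTop (nhds 0)) :
    Tendsto (fun x : ℝ => cinv x * (1 - ∫ ω, Real.exp (-(1 / x) * H 0 ω) ∂P))
      atTop (nhds κ) := by
  have hH0 : 0 ≤ᵐ[P] H 0 := ae_of_all _ (hnonneg 0)
  have hneg (t : ℝ) (ht : 1 ≤ t) : -(1 / c t) ∈ Iic 0 := by simp [(hc_pos t ht).le]
  have hpow (n : ℕ) : ∫ ω, exp (-((∑ i ∈ Finset.range n, H i ω) / c n)) ∂P =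
      mgf (H 0) P (-(1 / c n)) ^ n := by
    rw [← mgf_sum_range_of_identDistrib hmeas hindep hident]
    simp only [mgf, Finset.sum_apply, neg_mul, one_div_mul_eq_div]
  have hexp : Tendsto (fun n : ℕ ↦ mgf (H 0) P (-(1 / c n)) ^ n) atTop (𝓝 (exp (-κ))) := by
    refine (TendstoInMeasure.tendsto_integral_exp_neg ?_ (fun n ↦ by fun_prop) ?_ hκ.le).congr hpow
    · simpa [tendstoInMeasure_iff_measureReal_dist, Real.dist_eq, measureReal_def] using hprob
    · filter_upwards [eventually_ge_atTop 1] with n hn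
      exact ae_of_all _ fun ω ↦ div_nonneg (Finset.sum_nonneg fun i _ ↦ hnonneg i ω)
        (hc_pos n (by exact_mod_cast hn)).le
  have hmgf_pos : ∀ᶠ n : ℕ in atTop, 0 < mgf (H 0) P (-(1 / c n)) := by
    filter_upwards [eventually_ge_atTop 1] with n hn
    exact mgf_pos (integrable_exp_mul_of_nonneg_of_nonpos (hmeas 0).aemeasurable hH0
      (hneg n (by exact_mod_cast hn)))
  set φ : ℝ → ℝ := fun t ↦ 1 - mgf (H 0) P (-(1 / c t))
  have hφ_anti : AntitoneOn φ (Ici 1) := fun s hs t ht hst ↦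
    sub_le_sub_left (mgf_monotoneOn_of_nonneg (hmeas 0).aemeasurable hH0 (hneg s hs) (hneg t ht)
      (neg_le_neg (one_div_le_one_div_of_le (hc_pos s hs) (hc_mono.monotoneOn hs ht hst)))) 1
  have hφ_nonneg (t : ℝ) (ht : 1 ≤ t) : 0 ≤ φ t :=
    sub_nonneg.2 (mgf_le_one_of_nonneg_of_nonpos hH0 (hneg t ht))
  refine ((tendsto_mul_of_antitoneOn_of_tendsto_natCast_mul hφ_anti hφ_nonneg
    (tendsto_natCast_mul_one_sub_of_tendsto_pow hmgf_pos hexp)).comp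
    (tendsto_atTop_of_leftInvOn hc_cont hc_top hcinv_left)).congr' ?_
  filter_upwards [eventually_ge_atTop (c 1)] with x hx
  simp only [Function.comp_apply, φ, hcinv_right x hx]
  rfl
end

section
/- Assume the random walk oscillates, i.e. limsup_n S_n = +∞ and liminf_n S_n = −∞ almost surely, so that the strict descending ladder epochs T₀ = 0, T_{n+1} = min{k > T_n : S_k < S_{T_n}} are almost surely finite. Let H_n = −S_{T_n} be the ladder heights and let M₁ = max{S_k : 0 ≤ k < T₁}. For x > 0 and y > 0 let Λ(x,y) denote the event that the walk (S_k)_{k≥0} enters the interval (y,∞) strictly before it enters (−∞,−x). Then P(Λ(x,y)) ≤ P(M₁ > y) · Σ_{k=0}^∞ P(H_k ≤ x), where the (possibly infinite) series Σ_{k=0}^∞ P(H_k ≤ x) is the renewal function of the ladder height process. -/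
open MeasureTheory ProbabilityTheory Filter

noncomputable section

/-- `min_{0 ≤ k ≤ n} S_k`. -/
def walkMin {Ω : Type*} (ξ : ℕ → Ω → ℝ) (n : ℕ) (ω : Ω) : ℝ :=
  (Finset.range (n + 1)).inf' Finset.nonempty_range_add_one fun k => walk ξ k ω

/-- `V^#_n = max_{0 ≤ u ≤ v ≤ n} (S_v - S_u)`, the supremum of the reflected walk. -/
def reflMax {Ω : Type*} (ξ : ℕ → Ω → ℝ) (n : ℕ) (ω : Ω) : ℝ :=
  (Finset.range (n + 1)).sup' Finset.nonempty_range_add_one fun v =>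
    (Finset.range (v + 1)).sup' Finset.nonempty_range_add_one fun u =>
      walk ξ v ω - walk ξ u ω

/-- Strict descending ladder epochs: `T₀ = 0`, `T_{n+1} = min {k > T_n : S_k < S_{T_n}}`
(with the convention `sInf ∅ = 0`). -/
def ladderEpoch {Ω : Type*} (ξ : ℕ → Ω → ℝ) : ℕ → Ω → ℕ
  | 0 => fun _ => 0
  | n + 1 => fun ω =>
      sInf {k | ladderEpoch ξ n ω < k ∧ walk ξ k ω < walk ξ (ladderEpoch ξ n ω) ω}

/-- Ladder heights `H_n = -S_{T_n}`. -/
def ladderHeight {Ω : Type*} (ξ : ℕ → Ω → ℝ) (n : ℕ) (ω : Ω) : ℝ :=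
  - walk ξ (ladderEpoch ξ n ω) ω

/-- `M₁ = max {S_k : 0 ≤ k < T₁}`. -/
def ladderOvershoot {Ω : Type*} (ξ : ℕ → Ω → ℝ) (ω : Ω) : ℝ :=
  sSup ((fun k => walk ξ k ω) '' {k | k < ladderEpoch ξ 1 ω})

/-- `Λ(x,y)`: the walk enters `(y,∞)` strictly before it enters `(-∞,-x)`. -/
def hitsAboveBeforeBelow {Ω : Type*} (ξ : ℕ → Ω → ℝ) (x y : ℝ) : Set Ω :=
  {ω | ∃ k : ℕ, y < walk ξ k ω ∧ ∀ j ≤ k, -x ≤ walk ξ j ω}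

/-!
Cut a path of `Λ(x,y)` at the last strict descending ladder epoch `T_k = n` before the walk first
exceeds `y`. Up to time `n` the walk stays above `-x`, so `H_k ≤ x`; after time `n` it climbs more
than `y` above `S_n ≤ 0` without dropping below `S_n`. The second event depends only on the steps
after time `n`, so it is independent of `{T_k = n, H_k ≤ x}` and has the same probability as for
`n = 0`, where it forces `M₁ > y`. Summing over `k` and `n` gives the bound.
-/

open MeasureTheory ProbabilityTheory Finset

namespace RandomWalk

variable {Ω : Type*}

/-- Unlike `ladderEpoch`, this only looks at `S 0, …, S n` and never holds through the junk value
`sInf ∅ = 0`. -/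
def IsLadderEpoch (S : ℕ → ℝ) : ℕ → ℕ → Prop
  | 0, n => n = 0
  | k + 1, n => ∃ p, IsLadderEpoch S k p ∧ p < n ∧ S n < S p ∧ ∀ i, p < i → i < n → S p ≤ S i

def HasLadderEpochs (ξ : ℕ → Ω → ℝ) (ω : Ω) : Prop :=
  ∀ n, {k | ladderEpoch ξ n ω < k ∧ walk ξ k ω < walk ξ (ladderEpoch ξ n ω) ω}.Nonempty

section Ladder

variable {ξ : ℕ → Ω → ℝ} {ω : Ω}

lemma IsLadderEpoch.ladderEpoch_eq :
    ∀ {k n : ℕ}, IsLadderEpoch (fun j => walk ξ j ω) k n → ladderEpoch ξ k ω = n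
  | 0, _, h => h.symm
  | _ + 1, n, ⟨p, hp, hpn, hSn, hmin⟩ => by
    rw [ladderEpoch]
    dsimp only
    rw [hp.ladderEpoch_eq]
    refine le_antisymm (Nat.sInf_le ⟨hpn, hSn⟩) (le_of_not_gt fun hlt => ?_)
    obtain ⟨hp_lt, hS_lt⟩ := Nat.sInf_mem (s := {m | p < m ∧ walk ξ m ω < walk ξ p ω}) ⟨n, hpn, hSn⟩
    exact (hmin _ hp_lt hlt).not_gt hS_lt

lemma ladderEpoch_succ_spec {n : ℕ}
    (h : {k | ladderEpoch ξ n ω < k ∧ walk ξ k ω < walk ξ (ladderEpoch ξ n ω) ω}.Nonempty) :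
    ladderEpoch ξ n ω < ladderEpoch ξ (n + 1) ω ∧
      walk ξ (ladderEpoch ξ (n + 1) ω) ω < walk ξ (ladderEpoch ξ n ω) ω ∧
      ∀ i, ladderEpoch ξ n ω < i → i < ladderEpoch ξ (n + 1) ω →
        walk ξ (ladderEpoch ξ n ω) ω ≤ walk ξ i ω := by
  rw [ladderEpoch]
  refine ⟨(Nat.sInf_mem h).1, (Nat.sInf_mem h).2, fun i hi hlt => ?_⟩
  exact le_of_not_gt fun hS => Nat.notMem_of_lt_sInf hlt ⟨hi, hS⟩

namespace HasLadderEpochs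

variable (h : HasLadderEpochs ξ ω)
include h

lemma isLadderEpoch : ∀ k, IsLadderEpoch (fun j => walk ξ j ω) k (ladderEpoch ξ k ω)
  | 0 => rfl
  | k + 1 => ⟨_, isLadderEpoch k, ladderEpoch_succ_spec (h k)⟩

lemma strictMono_ladderEpoch : StrictMono fun k => ladderEpoch ξ k ω :=
  strictMono_nat_of_lt_succ fun k => (ladderEpoch_succ_spec (h k)).1

lemma walk_ladderEpoch_nonpos (k : ℕ) : walk ξ (ladderEpoch ξ k ω) ω ≤ 0 := by
  have hanti : StrictAnti fun k => walk ξ (ladderEpoch ξ k ω) ω :=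
    strictAnti_nat_of_succ_lt fun k => (ladderEpoch_succ_spec (h k)).2.1
  simpa [ladderEpoch, walk] using hanti.antitone (Nat.zero_le k)

lemma exists_ladderEpoch_le_lt (m : ℕ) :
    ∃ k, ladderEpoch ξ k ω ≤ m ∧ m < ladderEpoch ξ (k + 1) ω := by
  have hmono := h.strictMono_ladderEpoch
  obtain ⟨k, hk, hk'⟩ := hmono.exists_between_of_tendsto_atTop hmono.tendsto_atTop
    (Nat.succ_pos m)
  exact ⟨k, Nat.lt_succ_iff.mp hk, hk'⟩

end HasLadderEpochs

end Ladder

section Walk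

variable {β : Type*} {ξ : ℕ → Ω → ℝ} {ω : Ω}

@[simp]
lemma walk_zero : walk ξ 0 ω = 0 :=
  Finset.sum_range_zero _

def shift (ξ : ℕ → Ω → β) (n : ℕ) (ω : Ω) : ℕ → β := fun i => ξ (n + i) ω

lemma walk_add (n j : ℕ) : walk ξ (n + j) ω = walk ξ n ω + ∑ i ∈ range j, shift ξ n ω i :=
  Finset.sum_range_add _ n j

def ladderEvent (ξ : ℕ → Ω → ℝ) (x : ℝ) (k n : ℕ) : Set Ω :=
  {ω | IsLadderEpoch (fun j => walk ξ j ω) k n ∧ -x ≤ walk ξ n ω}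

def risesAboveBeforeDrop (y : ℝ) : Set (ℕ → ℝ) :=
  {s | ∃ j, y < ∑ i ∈ range j, s i ∧ ∀ i ≤ j, 0 ≤ ∑ l ∈ range i, s l}

lemma measurableSet_risesAboveBeforeDrop (y : ℝ) : MeasurableSet (risesAboveBeforeDrop y) :=
  measurableSet_setOfPred.2 (by fun_prop)

lemma mem_shift_preimage_risesAboveBeforeDrop {y : ℝ} {n : ℕ} :
    ω ∈ shift ξ n ⁻¹' risesAboveBeforeDrop y ↔
      ∃ j, y < walk ξ (n + j) ω - walk ξ n ω ∧ ∀ i ≤ j, walk ξ n ω ≤ walk ξ (n + i) ω := by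
  simp only [Set.mem_preimage, risesAboveBeforeDrop, Set.mem_ofPred_eq, walk_add,
    add_sub_cancel_left, le_add_iff_nonneg_right]

end Walk

section Measurability

variable {m : MeasurableSpace Ω}

lemma measurableSet_isLadderEpoch {S : ℕ → Ω → ℝ} :
    ∀ {k n : ℕ}, (∀ j ≤ n, Measurable (S j)) →
      MeasurableSet {ω | IsLadderEpoch (fun j => S j ω) k n}
  | 0, n, _ => by simp [IsLadderEpoch]
  | k + 1, n, hS => by
    refine measurableSet_setOfPred.2 (Measurable.exists fun p => ?_)
    by_cases hpn : p < n
    · have hp := measurableSet_isLadderEpoch (k := k) fun j hj => hS j (hj.trans hpn.le)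
      refine hp.mem.and (measurable_const.and (((hS n le_rfl).lt (hS p hpn.le)).and
        (Measurable.forall fun i => Measurable.imp measurable_const ?_)))
      by_cases hin : i < n
      · exact Measurable.imp measurable_const ((hS p hpn.le).le' (hS i hin.le))
      · simp [hin]
    · simp [hpn]

lemma measurable_walk_of_le {ξ : ℕ → Ω → ℝ} {n : ℕ} (hξ : ∀ i < n, Measurable (ξ i)) {j : ℕ}
    (hj : j ≤ n) : Measurable (walk ξ j) :=
  Finset.measurable_sum _ fun i hi => hξ i ((Finset.mem_range.1 hi).trans_le hj)

lemma measurableSet_ladderEvent {ξ : ℕ → Ω → ℝ} {n : ℕ} (hξ : ∀ i < n, Measurable (ξ i))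
    (x : ℝ) (k : ℕ) : MeasurableSet (ladderEvent ξ x k n) :=
  (measurableSet_isLadderEpoch fun _ hj => measurable_walk_of_le hξ hj).inter
    (measurableSet_le measurable_const (measurable_walk_of_le hξ le_rfl))

end Measurability

section Independence

variable {β : Type*} [mβ : MeasurableSpace β] [MeasurableSpace Ω] {P : Measure Ω}
  {ξ : ℕ → Ω → β}

lemma measurable_shift (hmeas : ∀ i, Measurable (ξ i)) (n : ℕ) : Measurable (shift ξ n) :=
  measurable_pi_iff.2 fun i => hmeas (n + i)

lemma map_shift_eq_infinitePi (hmeas : ∀ i, Measurable (ξ i)) (hindep : iIndepFun ξ P)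
    (hident : ∀ i, IdentDistrib (ξ i) (ξ 0) P P) (n : ℕ) :
    P.map (shift ξ n) = Measure.infinitePi fun _ => P.map (ξ 0) := by
  unfold shift
  rw [(hindep.precomp (add_right_injective n)).map_fun_eq_infinitePi_map fun i => hmeas _]
  simp_rw [(hident _).map_eq]

lemma indep_iSup_lt_comap_shift (hmeas : ∀ i, Measurable (ξ i)) (hindep : iIndepFun ξ P)
    (n : ℕ) :
    Indep (⨆ i ∈ Set.Iio n, mβ.comap (ξ i)) (MeasurableSpace.pi.comap (shift ξ n)) P := by
  refine indep_of_indep_of_le_right (indep_iSup_of_disjoint (fun i => (hmeas i).comap_le)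
    hindep.iIndep (Set.Iio_disjoint_Ici le_rfl)) (Measurable.comap_le ?_)
  refine @measurable_pi_lambda _ _ _ (⨆ i ∈ Set.Ici n, mβ.comap (ξ i)) _ _ fun i => ?_
  exact (comap_measurable (ξ (n + i))).mono
    (le_iSup₂ (f := fun j (_ : j ∈ Set.Ici n) => mβ.comap (ξ j)) (n + i) (by simp)) le_rfl

end Independence

section Pathwise

variable {ξ : ℕ → Ω → ℝ} {ω : Ω} {x y : ℝ}

lemma HasLadderEpochs.exists_mem_ladderEvent (h : HasLadderEpochs ξ ω)
    (hω : ω ∈ hitsAboveBeforeBelow ξ x y) :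
    ∃ k n, ω ∈ ladderEvent ξ x k n ∧ ω ∈ shift ξ n ⁻¹' risesAboveBeforeDrop y := by
  obtain ⟨m, hym, hbound⟩ := hω
  obtain ⟨k, hkm, hmk⟩ := h.exists_ladderEpoch_le_lt m
  refine ⟨k, _, ⟨h.isLadderEpoch k, hbound _ hkm⟩,
    mem_shift_preimage_risesAboveBeforeDrop.2 ⟨m - ladderEpoch ξ k ω, ?_, fun i hi => ?_⟩⟩
  · rw [Nat.add_sub_cancel' hkm]
    linarith [h.walk_ladderEpoch_nonpos k]
  · rcases i.eq_zero_or_pos with rfl | hi0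
    · rfl
    · exact (ladderEpoch_succ_spec (h k)).2.2 _ (by omega) (by omega)

lemma lt_ladderOvershoot
    (h : {k | ladderEpoch ξ 0 ω < k ∧ walk ξ k ω < walk ξ (ladderEpoch ξ 0 ω) ω}.Nonempty)
    (hω : ω ∈ shift ξ 0 ⁻¹' risesAboveBeforeDrop y) : y < ladderOvershoot ξ ω := by
  obtain ⟨j, hyj, hj⟩ := mem_shift_preimage_risesAboveBeforeDrop.1 hω
  simp only [zero_add, walk_zero, sub_zero] at hyj hj
  have hjT : j < ladderEpoch ξ 1 ω := lt_of_not_ge fun hle =>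
    (ladderEpoch_succ_spec h).2.1.not_ge (hj _ hle)
  exact hyj.trans_le (le_csSup ((Set.finite_Iio _).image _).bddAbove ⟨j, hjT, rfl⟩)

end Pathwise

section Probability

variable [MeasurableSpace Ω] {P : Measure Ω} {ξ : ℕ → Ω → ℝ}

lemma measure_ladderEvent_inter_shift (hmeas : ∀ i, Measurable (ξ i)) (hindep : iIndepFun ξ P)
    (hident : ∀ i, IdentDistrib (ξ i) (ξ 0) P P) {C : Set (ℕ → ℝ)} (hC : MeasurableSet C)
    (x : ℝ) (k n : ℕ) :
    P (ladderEvent ξ x k n ∩ shift ξ n ⁻¹' C)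
      = P (ladderEvent ξ x k n) * P (shift ξ 0 ⁻¹' C) := by
  have hpast : MeasurableSet[⨆ i ∈ Set.Iio n, MeasurableSpace.comap (ξ i) inferInstance]
      (ladderEvent ξ x k n) :=
    measurableSet_ladderEvent (fun i hi => (comap_measurable (ξ i)).mono
      (le_iSup₂ (f := fun j (_ : j ∈ Set.Iio n) => MeasurableSpace.comap (ξ j) inferInstance)
        i hi) le_rfl) x k
  rw [(Indep_iff _ _ P).1 (indep_iSup_lt_comap_shift hmeas hindep n) _ _ hpast ⟨C, hC, rfl⟩,
    ← Measure.map_apply (measurable_shift hmeas n) hC,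
    ← Measure.map_apply (measurable_shift hmeas 0) hC,
    map_shift_eq_infinitePi hmeas hindep hident, map_shift_eq_infinitePi hmeas hindep hident]

lemma tsum_measure_ladderEvent_le (hmeas : ∀ i, Measurable (ξ i)) (x : ℝ) (k : ℕ) :
    ∑' n, P (ladderEvent ξ x k n) ≤ P {ω | ladderHeight ξ k ω ≤ x} := by
  refine (tsum_meas_le_meas_iUnion_of_disjoint P
    (fun n => measurableSet_ladderEvent (fun i _ => hmeas i) x k) ?_).trans (measure_mono ?_)
  · exact fun n n' hne => Set.disjoint_left.2 fun ω hn hn' =>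
      hne (hn.1.ladderEpoch_eq.symm.trans hn'.1.ladderEpoch_eq)
  · refine Set.iUnion_subset fun n ω ⟨hT, hx⟩ => ?_
    rw [Set.mem_ofPred_eq, ladderHeight, hT.ladderEpoch_eq]
    linarith

end Probability

end RandomWalk

open RandomWalk in
theorem exit_problem_upper_bound_general
    {Ω : Type*} [MeasurableSpace Ω] (P : Measure Ω)
    (ξ : ℕ → Ω → ℝ) (hmeas : ∀ i, Measurable (ξ i))
    (hindep : iIndepFun ξ P)
    (hident : ∀ i, IdentDistrib (ξ i) (ξ 0) P P)
    (hladder : ∀ᵐ ω ∂P, ∀ n : ℕ,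
      {k | ladderEpoch ξ n ω < k ∧ walk ξ k ω < walk ξ (ladderEpoch ξ n ω) ω}.Nonempty)
    (x y : ℝ) :
    P (hitsAboveBeforeBelow ξ x y)
      ≤ P {ω | y < ladderOvershoot ξ ω} * ∑' k : ℕ, P {ω | ladderHeight ξ k ω ≤ x} := by
  set R := risesAboveBeforeDrop y
  have hR : MeasurableSet R := measurableSet_risesAboveBeforeDrop y
  have hcover : hitsAboveBeforeBelow ξ x y
      ≤ᵐ[P] ⋃ k, ⋃ n, ladderEvent ξ x k n ∩ shift ξ n ⁻¹' R := by
    filter_upwards [hladder] with ω hω hΛ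
    exact Set.mem_iUnion₂.2 (HasLadderEpochs.exists_mem_ladderEvent hω hΛ)
  have hrise : P (shift ξ 0 ⁻¹' R) ≤ P {ω | y < ladderOvershoot ξ ω} := measure_mono_ae <| by
    filter_upwards [hladder] with ω hω hωR using lt_ladderOvershoot (hω 0) hωR
  calc P (hitsAboveBeforeBelow ξ x y)
      ≤ ∑' k, ∑' n, P (ladderEvent ξ x k n ∩ shift ξ n ⁻¹' R) :=
        (measure_mono_ae hcover).trans <| (measure_iUnion_le _).trans <|
          ENNReal.tsum_le_tsum fun k => measure_iUnion_le _
    _ = P (shift ξ 0 ⁻¹' R) * ∑' k, ∑' n, P (ladderEvent ξ x k n) := by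
        simp_rw [measure_ladderEvent_inter_shift hmeas hindep hident hR,
          mul_comm _ (P (shift ξ 0 ⁻¹' R)), ENNReal.tsum_mul_left]
    _ ≤ P {ω | y < ladderOvershoot ξ ω} * ∑' k, P {ω | ladderHeight ξ k ω ≤ x} :=
        mul_le_mul' hrise (ENNReal.tsum_le_tsum fun k => tsum_measure_ladderEvent_le hmeas x k)

/-- If the walk oscillates (so the strict descending ladder epochs are
a.s. finite), then for `x > 0`, `y > 0`:
`P(Λ(x,y)) ≤ P(M₁ > y) ⬝ Σ_{k=0}^∞ P(H_k ≤ x)`. -/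
theorem exit_problem_upper_bound
    {Ω : Type*} [MeasurableSpace Ω] (P : Measure Ω) [IsProbabilityMeasure P]
    (ξ : ℕ → Ω → ℝ) (hmeas : ∀ i, Measurable (ξ i))
    (hindep : iIndepFun ξ P)
    (hident : ∀ i, IdentDistrib (ξ i) (ξ 0) P P)
    (hosc : ∀ᵐ ω ∂P, (∀ c : ℝ, ∃ n : ℕ, c < walk ξ n ω) ∧ (∀ c : ℝ, ∃ n : ℕ, walk ξ n ω < c))
    (hladder : ∀ᵐ ω ∂P, ∀ n : ℕ,
      {k | ladderEpoch ξ n ω < k ∧ walk ξ k ω < walk ξ (ladderEpoch ξ n ω) ω}.Nonempty)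
    (x y : ℝ) (hx : 0 < x) (hy : 0 < y) :
    P (hitsAboveBeforeBelow ξ x y)
      ≤ P {ω | y < ladderOvershoot ξ ω} * ∑' k : ℕ, P {ω | ladderHeight ξ k ω ≤ x} :=
  exit_problem_upper_bound_general P ξ hmeas hindep hident hladder x y
end
end

section
/- Let a : [1,∞) → [1,∞) be a continuous, strictly increasing, unbounded function with a(1) = 1 whose inverse a⁻¹ is regularly varying at infinity with index α > 0. Let M_n := max_{0≤k≤n} S_k (so M_n ≥ 0), and suppose there exists a constant C such that P(M_n > x) ≤ C·n/a⁻¹(x) for all integers n ≥ 1 and reals x ≥ 1. Then for every δ with 0 < δ < α one has sup_{n≥1} E[(M_n/a(n))^δ] < ∞. -/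
/-!
Fix `l > 1` with `q := 2 l ^ δ < l ^ α`. Regular variation of `a⁻¹` gives, for some `x₁ ≥ 1`,
`a⁻¹ (l ^ k x₁ a(n)) ≥ q ^ k n`, so the assumed tail bound yields
`P(M_n / a(n) > l ^ k x₁) ≤ C q ^ (-k)` uniformly in `n`. On the shell
`l ^ k x₁ < M_n / a(n) ≤ l ^ (k+1) x₁` the integrand is at most `(l ^ (k+1) x₁) ^ δ`, and
`(l ^ (k+1) x₁) ^ δ q ^ (-k) = (l x₁) ^ δ 2 ^ (-k)` is summable.
-/

open MeasureTheory ProbabilityTheory Filter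

noncomputable section

open Set

theorem StrictMonoOn.monotoneOn_of_rightInvOn {α β : Type*} [LinearOrder α] [LinearOrder β]
    {f : α → β} {g : β → α} {s : Set α} {t : Set β} (hf : StrictMonoOn f s)
    (hg : MapsTo g t s) (hgf : RightInvOn g f t) : MonotoneOn g t := by
  intro y hy z hz hyz
  by_contra! h
  have := hf (hg hz) (hg hy) h
  rw [hgf hy, hgf hz] at this
  exact this.not_ge hyz

theorem exists_one_lt_mul_rpow_lt_rpow (c : ℝ) {δ α : ℝ} (hδα : δ < α) :
    ∃ l : ℝ, 1 < l ∧ c * l ^ δ < l ^ α := by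
  set b := |c| + 2
  have hb : 1 < b := by linarith [abs_nonneg c]
  refine ⟨b ^ (α - δ)⁻¹, Real.one_lt_rpow hb (inv_pos.2 (sub_pos.2 hδα)), ?_⟩
  have hl : 0 < b ^ (α - δ)⁻¹ := by positivity
  have hsplit : (b ^ (α - δ)⁻¹) ^ α = (b ^ (α - δ)⁻¹) ^ (α - δ) * (b ^ (α - δ)⁻¹) ^ δ := by
    rw [← Real.rpow_add hl, sub_add_cancel]
  rw [hsplit, Real.rpow_inv_rpow (by positivity) (sub_pos.2 hδα).ne']
  exact mul_lt_mul_of_pos_right ((le_abs_self c).trans_lt (by linarith)) (by positivity)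

theorem exists_forall_pow_mul_le_of_tendsto_div {f : ℝ → ℝ} {l r L : ℝ} (hl : 1 ≤ l)
    (hr : 0 ≤ r) (hrL : r < L) (hf_pos : ∀ᶠ x in atTop, 0 < f x)
    (hf : Tendsto (fun x => f (l * x) / f x) atTop (nhds L)) :
    ∃ x₀, ∀ x, x₀ ≤ x → ∀ k : ℕ, r ^ k * f x ≤ f (l ^ k * x) := by
  obtain ⟨x₀, hx₀⟩ := eventually_atTop.1
    (((hf.eventually (eventually_gt_nhds hrL)).and hf_pos).and (eventually_ge_atTop 0))
  refine ⟨x₀, fun x hx k => ?_⟩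
  induction k generalizing x with
  | zero => simp
  | succ k ih =>
    obtain ⟨⟨hratio, hpos⟩, hx0⟩ := hx₀ x hx
    calc r ^ (k + 1) * f x = r ^ k * (r * f x) := by ring
      _ ≤ r ^ k * f (l * x) := by gcongr; exact ((lt_div_iff₀ hpos).1 hratio).le
      _ ≤ f (l ^ k * (l * x)) := ih (l * x) (hx.trans (le_mul_of_one_le_left hx0 hl))
      _ = f (l ^ (k + 1) * x) := by ring_nf

theorem exists_forall_pow_mul_le_inv_mul {a ainv : ℝ → ℝ} {l q L : ℝ}
    (ha : StrictMonoOn a (Ici 1)) (ha_maps : MapsTo a (Ici 1) (Ici 1))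
    (hleft : LeftInvOn ainv a (Ici 1)) (hright : RightInvOn ainv a (Ici 1))
    (hainv_maps : MapsTo ainv (Ici 1) (Ici 1)) (hl : 1 ≤ l) (hq : 0 ≤ q) (hqL : q < L)
    (hrv : Tendsto (fun x => ainv (l * x) / ainv x) atTop (nhds L)) :
    ∃ x₁, 1 ≤ x₁ ∧ ∀ x, 1 ≤ x → ∀ k : ℕ, q ^ k * x ≤ ainv (l ^ k * x₁ * a x) := by
  have hainv_pos : ∀ᶠ y in atTop, 0 < ainv y :=
    (eventually_ge_atTop 1).mono fun y hy => one_pos.trans_le (hainv_maps hy)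
  obtain ⟨x₀, hgrowth⟩ := exists_forall_pow_mul_le_of_tendsto_div hl hq hqL hainv_pos hrv
  have hmono : MonotoneOn ainv (Ici 1) := ha.monotoneOn_of_rightInvOn hainv_maps hright
  refine ⟨max x₀ 1, le_max_right _ _, fun x hx k => ?_⟩
  have hax : 1 ≤ a x := ha_maps hx
  calc q ^ k * x = q ^ k * ainv (a x) := by rw [hleft hx]
    _ ≤ q ^ k * ainv (max x₀ 1 * a x) := by
        gcongr
        exact hmono hax (one_le_mul_of_one_le_of_one_le (le_max_right _ _) hax)
          (le_mul_of_one_le_left (by positivity) (le_max_right _ _))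
    _ ≤ ainv (l ^ k * max x₀ 1 * a x) := by
        rw [mul_assoc]
        exact hgrowth _ ((le_max_left _ _).trans (le_mul_of_one_le_right (by positivity) hax)) k

theorem ofReal_rpow_le_add_tsum_indicator {y l x₀ δ : ℝ} (hy : 0 ≤ y) (hl : 1 < l)
    (hx₀ : 0 < x₀) (hδ : 0 ≤ δ) :
    ENNReal.ofReal (y ^ δ) ≤ ENNReal.ofReal ((l * x₀) ^ δ) + ∑' k : ℕ,
      (Ioi (l ^ k * x₀)).indicator (fun _ => ENNReal.ofReal ((l ^ (k + 1) * x₀) ^ δ)) y := by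
  classical
  have hex : ∃ K : ℕ, y ≤ l ^ (K + 1) * x₀ := by
    obtain ⟨n, hn⟩ := pow_unbounded_of_one_lt (y / x₀) hl
    refine ⟨n, ((div_lt_iff₀ hx₀).1 hn).le.trans ?_⟩
    gcongr
    exacts [hl.le, n.le_succ]
  have hK := Real.rpow_le_rpow hy (Nat.find_spec hex) hδ
  rcases hfind : Nat.find hex with _ | j
  · rw [hfind, zero_add, pow_one] at hK
    exact le_add_right (ENNReal.ofReal_le_ofReal hK)
  · have hj : l ^ (j + 1) * x₀ < y :=
      not_le.1 (Nat.find_min hex (hfind ▸ j.lt_succ_self))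
    refine le_add_left (le_trans ?_ (ENNReal.le_tsum (j + 1)))
    rw [indicator_of_mem (mem_Ioi.2 hj)]
    exact ENNReal.ofReal_le_ofReal (hfind ▸ hK)

theorem tsum_ofReal_rpow_mul_div_geometric {l x₀ c δ : ℝ} (hl : 0 < l) (hx₀ : 0 ≤ x₀)
    (hc : 0 ≤ c) :
    ∑' k : ℕ, ENNReal.ofReal ((l ^ (k + 1) * x₀) ^ δ) * ENNReal.ofReal (c / (2 * l ^ δ) ^ k)
      = ENNReal.ofReal (2 * c * (l * x₀) ^ δ) := by
  have hterm : ∀ k : ℕ,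
      ENNReal.ofReal ((l ^ (k + 1) * x₀) ^ δ) * ENNReal.ofReal (c / (2 * l ^ δ) ^ k)
        = ENNReal.ofReal (c * (l * x₀) ^ δ * (1 / 2) ^ k) := by
    intro k
    have hpow : (l ^ (k + 1) * x₀) ^ δ = (l ^ δ) ^ k * (l * x₀) ^ δ := by
      rw [pow_succ, mul_assoc, Real.mul_rpow (by positivity) (by positivity),
        Real.rpow_pow_comm hl.le]
    rw [← ENNReal.ofReal_mul (by positivity), hpow, mul_pow, div_pow, one_pow]
    congr 1
    field_simp
  rw [tsum_congr hterm, ← ENNReal.ofReal_tsum_of_nonneg (fun k => by positivity)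
    (summable_geometric_two.mul_left _), tsum_mul_left, tsum_geometric_two, mul_comm, ← mul_assoc]

/-- Each shell `l ^ k x₀ < Y` is replaced by its measurable hull, which has the same measure. -/
theorem lintegral_ofReal_rpow_le_of_geometric_tail {Ω : Type*} [MeasurableSpace Ω]
    {μ : Measure Ω} [IsProbabilityMeasure μ] {Y : Ω → ℝ} (hY : ∀ ω, 0 ≤ Y ω) {l x₀ c δ : ℝ}
    (hl : 1 < l) (hx₀ : 0 < x₀) (hc : 0 ≤ c) (hδ : 0 ≤ δ)
    (htail : ∀ k : ℕ, μ {ω | l ^ k * x₀ < Y ω} ≤ ENNReal.ofReal (c / (2 * l ^ δ) ^ k)) :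
    ∫⁻ ω, ENNReal.ofReal (Y ω ^ δ) ∂μ ≤ ENNReal.ofReal ((l * x₀) ^ δ * (1 + 2 * c)) := by
  set s : ℕ → Set Ω := fun k => toMeasurable μ {ω | l ^ k * x₀ < Y ω}
  set w : ℕ → ENNReal := fun k => ENNReal.ofReal ((l ^ (k + 1) * x₀) ^ δ)
  have hs : ∀ k, MeasurableSet (s k) := fun k => measurableSet_toMeasurable _ _
  calc ∫⁻ ω, ENNReal.ofReal (Y ω ^ δ) ∂μ
      ≤ ∫⁻ ω, ENNReal.ofReal ((l * x₀) ^ δ) + ∑' k, (s k).indicator (fun _ => w k) ω ∂μ := by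
        refine lintegral_mono fun ω => (ofReal_rpow_le_add_tsum_indicator (hY ω) hl hx₀ hδ).trans ?_
        gcongr with k
        rw [← indicator_comp_right Y]
        exact indicator_le_indicator_of_subset (subset_toMeasurable μ _) (fun _ => zero_le) ω
    _ = ENNReal.ofReal ((l * x₀) ^ δ) + ∑' k, w k * μ (s k) := by
        rw [lintegral_add_left measurable_const, lintegral_const, measure_univ, mul_one,
          lintegral_tsum fun k => (measurable_const.indicator (hs k)).aemeasurable]
        simp_rw [lintegral_indicator_const (hs _)]
    _ ≤ ENNReal.ofReal ((l * x₀) ^ δ) + ∑' k, w k * ENNReal.ofReal (c / (2 * l ^ δ) ^ k) := by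
        gcongr with k
        rw [measure_toMeasurable]
        exact htail k
    _ = ENNReal.ofReal ((l * x₀) ^ δ * (1 + 2 * c)) := by
        rw [tsum_ofReal_rpow_mul_div_geometric (by linarith) hx₀.le hc,
          ← ENNReal.ofReal_add (by positivity) (by positivity)]
        ring_nf

theorem walkMax_nonneg {Ω : Type*} (ξ : ℕ → Ω → ℝ) (n : ℕ) (ω : Ω) : 0 ≤ walkMax ξ n ω :=
  Finset.le_sup'_of_le _ (Finset.mem_range.2 n.succ_pos) (by simp [walk])

theorem uniform_moment_bound_walkMax_general
    {Ω : Type*} [MeasurableSpace Ω] (P : Measure Ω) [IsProbabilityMeasure P]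
    (ξ : ℕ → Ω → ℝ)
    (a ainv : ℝ → ℝ) (α : ℝ)
    (ha_mono : StrictMonoOn a (Set.Ici 1))
    (ha_maps : ∀ x : ℝ, 1 ≤ x → 1 ≤ a x)
    (hainv_left : ∀ x : ℝ, 1 ≤ x → ainv (a x) = x)
    (hainv_right : ∀ y : ℝ, 1 ≤ y → a (ainv y) = y)
    (hainv_maps : ∀ y : ℝ, 1 ≤ y → 1 ≤ ainv y)
    (hainv_rv : ∀ l : ℝ, 0 < l →
      Tendsto (fun x : ℝ => ainv (l * x) / ainv x) atTop (nhds (l ^ α)))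
    (C : ℝ)
    (hbound : ∀ n : ℕ, 1 ≤ n → ∀ x : ℝ, 1 ≤ x →
      (P {ω | x < walkMax ξ n ω}).toReal ≤ C * n / ainv x)
    (δ : ℝ) (hδ : 0 < δ) (hδα : δ < α) :
    ∃ B : ℝ, ∀ n : ℕ, 1 ≤ n →
      ∫⁻ ω, ENNReal.ofReal ((walkMax ξ n ω / a n) ^ δ) ∂P ≤ ENNReal.ofReal B := by
  obtain ⟨l, hl, hlα⟩ := exists_one_lt_mul_rpow_lt_rpow 2 hδα
  obtain ⟨x₁, hx₁, hgrowth⟩ := exists_forall_pow_mul_le_inv_mul ha_mono ha_maps hainv_left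
    hainv_right hainv_maps hl.le (by positivity) hlα (hainv_rv l (by linarith))
  have hC : 0 ≤ C := by
    have h := ENNReal.toReal_nonneg.trans (hbound 1 le_rfl 1 le_rfl)
    simpa using (le_div_iff₀ (one_pos.trans_le (hainv_maps 1 le_rfl))).1 h
  refine ⟨(l * x₁) ^ δ * (1 + 2 * C), fun n hn => ?_⟩
  have hn' : (1 : ℝ) ≤ n := by exact_mod_cast hn
  have han : 0 < a n := one_pos.trans_le (ha_maps n hn')
  refine lintegral_ofReal_rpow_le_of_geometric_tail
    (fun ω => div_nonneg (walkMax_nonneg ξ n ω) han.le) hl (by positivity) hC hδ.le fun k => ?_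
  have hset : {ω | l ^ k * x₁ < walkMax ξ n ω / a n} = {ω | l ^ k * x₁ * a n < walkMax ξ n ω} :=
    Set.ext fun ω => lt_div_iff₀ han
  rw [hset, ← ENNReal.ofReal_toReal (measure_ne_top P _)]
  refine ENNReal.ofReal_le_ofReal ((hbound n hn _ ?_).trans ?_)
  · exact one_le_mul_of_one_le_of_one_le
      (one_le_mul_of_one_le_of_one_le (one_le_pow₀ hl.le) hx₁) (ha_maps n hn')
  · calc C * n / ainv (l ^ k * x₁ * a n) ≤ C * n / ((2 * l ^ δ) ^ k * n) :=
          div_le_div_of_nonneg_left (by positivity) (by positivity) (hgrowth n hn' k)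
      _ = C / (2 * l ^ δ) ^ k := mul_div_mul_right C _ (by positivity)

/-- Let `a : [1,∞) → [1,∞)` be continuous, strictly increasing,
unbounded, `a(1) = 1`, with inverse `a⁻¹` regularly varying with index `α > 0`, and set
`M_n = max_{0≤k≤n} S_k`.  If `P(M_n > x) ≤ C n / a⁻¹(x)` for all `n ≥ 1, x ≥ 1`, then for
every `0 < δ < α`, `sup_{n ≥ 1} E[(M_n / a(n))^δ] < ∞`. -/
theorem uniform_moment_bound_walkMax
    {Ω : Type*} [MeasurableSpace Ω] (P : Measure Ω) [IsProbabilityMeasure P]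
    (ξ : ℕ → Ω → ℝ) (hmeas : ∀ i, Measurable (ξ i))
    (hindep : iIndepFun ξ P)
    (hident : ∀ i, IdentDistrib (ξ i) (ξ 0) P P)
    (a ainv : ℝ → ℝ) (α : ℝ) (hα : 0 < α)
    (ha_cont : ContinuousOn a (Set.Ici 1))
    (ha_mono : StrictMonoOn a (Set.Ici 1))
    (ha_top : Tendsto a atTop atTop)
    (ha_one : a 1 = 1)
    (ha_maps : ∀ x : ℝ, 1 ≤ x → 1 ≤ a x)
    (hainv_left : ∀ x : ℝ, 1 ≤ x → ainv (a x) = x)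
    (hainv_right : ∀ y : ℝ, 1 ≤ y → a (ainv y) = y)
    (hainv_maps : ∀ y : ℝ, 1 ≤ y → 1 ≤ ainv y)
    (hainv_rv : ∀ l : ℝ, 0 < l →
      Tendsto (fun x : ℝ => ainv (l * x) / ainv x) atTop (nhds (l ^ α)))
    (C : ℝ)
    (hbound : ∀ n : ℕ, 1 ≤ n → ∀ x : ℝ, 1 ≤ x →
      (P {ω | x < walkMax ξ n ω}).toReal ≤ C * n / ainv x)
    (δ : ℝ) (hδ : 0 < δ) (hδα : δ < α) :
    ∃ B : ℝ, ∀ n : ℕ, 1 ≤ n →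
      ∫⁻ ω, ENNReal.ofReal ((walkMax ξ n ω / a n) ^ δ) ∂P ≤ ENNReal.ofReal B :=
  uniform_moment_bound_walkMax_general P ξ a ainv α ha_mono ha_maps hainv_left hainv_right
    hainv_maps hainv_rv C hbound δ hδ hδα
end
end

section
/- Let a : [1,∞) → [1,∞) be a continuous, strictly increasing, unbounded function with a(1) = 1 whose inverse a⁻¹ is regularly varying at infinity with index α ∈ (0,2]. Assume: (i) there is C₀ such that a⁻¹(x)·P(ξ₁ > x) ≤ C₀ and a⁻¹(x)·P(ξ₁ < −x) ≤ C₀ for all x ≥ 1; (ii) there is C₁ such that E[ξ₁²·1_{|ξ₁|≤z}] ≤ C₁·z²/a⁻¹(z) for all z ≥ 1; (iii) there is C₂ such that |E[ξ₁·1_{|ξ₁|≤z}]| ≤ C₂·z/a⁻¹(z) for all z ≥ 1. Then there exists a constant C such that for all integers n ≥ 1 and all reals x ≥ 1: P(S_n > x) ≤ C·n/a⁻¹(x). -/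
/-!
Truncate every step at the level `x`. The event that some `|ξᵢ|`, `i < n`, exceeds `x` has
probability at most `n P(|ξ₁| > x) ≤ 2 C₀ n / a⁻¹(x)` by (i); off this event the walk `S_n`
coincides with the sum `T_n` of the truncated steps. By (iii) and (ii), `T_n` has mean at most
`|C₂| n x / a⁻¹(x)` and variance at most `|C₁| n x² / a⁻¹(x)`. If the mean is at most `x / 2`,
Chebyshev's inequality bounds `P(T_n > x)` by `4 |C₁| n / a⁻¹(x)`; otherwise
`2 |C₂| n / a⁻¹(x) ≥ 1` already bounds it.
-/

open MeasureTheory ProbabilityTheory Filter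

noncomputable section

def cutoff (x : ℝ) : ℝ → ℝ := {y | |y| ≤ x}.indicator id

section Cutoff

variable {Ω : Type*} [MeasurableSpace Ω] {μ : Measure Ω} {x : ℝ}

lemma measurable_cutoff : Measurable (cutoff x) :=
  measurable_id.indicator (measurableSet_le measurable_abs measurable_const)

lemma abs_cutoff_le (hx : 0 ≤ x) (y : ℝ) : |cutoff x y| ≤ x := by
  by_cases hy : |y| ≤ x <;> simp [cutoff, hy, hx]

lemma cutoff_of_abs_le {y : ℝ} (hy : |y| ≤ x) : cutoff x y = y := by
  simp [cutoff, hy]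

lemma integral_comp_cutoff {g : ℝ → ℝ} (hg : g 0 = 0) {f : Ω → ℝ} (hf : Measurable f) :
    ∫ ω, g (cutoff x (f ω)) ∂μ = ∫ ω in {ω | |f ω| ≤ x}, g (f ω) ∂μ := by
  have hS : MeasurableSet {ω | |f ω| ≤ x} := measurableSet_le hf.abs measurable_const
  rw [← integral_indicator hS]
  congr 1 with ω
  by_cases hω : |f ω| ≤ x <;> simp [cutoff, hω, hg]

end Cutoff

section Moments

variable {Ω : Type*} [MeasurableSpace Ω] {μ : Measure Ω} {X : ℕ → Ω → ℝ}

lemma integral_sum_range_of_identDistrib (hint : Integrable (X 0) μ)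
    (hident : ∀ i, IdentDistrib (X i) (X 0) μ μ) (n : ℕ) :
    ∫ ω, ∑ i ∈ Finset.range n, X i ω ∂μ = n * ∫ ω, X 0 ω ∂μ := by
  rw [integral_finsetSum _ fun i _ => (hident i).integrable_iff.mpr hint]
  simp [(hident _).integral_eq]

lemma variance_sum_range_of_iIndepFun [IsProbabilityMeasure μ] (hmem : MemLp (X 0) 2 μ)
    (hindep : iIndepFun X μ) (hident : ∀ i, IdentDistrib (X i) (X 0) μ μ) (n : ℕ) :
    variance (fun ω => ∑ i ∈ Finset.range n, X i ω) μ = n * variance (X 0) μ := by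
  rw [← Finset.sum_fn, IndepFun.variance_sum (fun i _ => (hident i).memLp_iff.mpr hmem)
    fun i _ j _ hij => hindep.indepFun hij]
  simp [(hident _).variance_eq]

lemma measureReal_lt_le_variance_div_sq [IsFiniteMeasure μ] {Y : Ω → ℝ} (hY : MemLp Y 2 μ)
    {t x : ℝ} (ht : 0 < t) (hx : μ[Y] + t ≤ x) :
    μ.real {ω | x < Y ω} ≤ variance Y μ / t ^ 2 := by
  have hsub : {ω | x < Y ω} ⊆ {ω | t ≤ |Y ω - μ[Y]|} := fun ω (hω : x < Y ω) =>
    (show t ≤ Y ω - μ[Y] by linarith).trans (le_abs_self _)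
  refine (measureReal_mono hsub).trans ?_
  rw [measureReal_def]
  exact ENNReal.toReal_le_of_le_ofReal (div_nonneg (variance_nonneg _ _) (sq_nonneg t))
    (meas_ge_le_variance_div_sq hY ht)

lemma measureReal_lt_abs_le [IsFiniteMeasure μ] (f : Ω → ℝ) (x : ℝ) :
    μ.real {ω | x < |f ω|} ≤ μ.real {ω | x < f ω} + μ.real {ω | f ω < -x} := by
  refine (measureReal_mono fun ω (hω : x < |f ω|) => ?_).trans (measureReal_union_le _ _)
  rcases lt_abs.mp hω with h | h
  · exact Or.inl h
  · exact Or.inr (show f ω < -x by linarith)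

end Moments

lemma walk_lt_subset {Ω : Type*} (ξ : ℕ → Ω → ℝ) (n : ℕ) (x : ℝ) :
    {ω | x < walk ξ n ω} ⊆ (⋃ i ∈ Finset.range n, {ω | x < |ξ i ω|}) ∪
      {ω | x < ∑ i ∈ Finset.range n, cutoff x (ξ i ω)} := by
  intro ω hω
  by_cases hbig : ∃ i ∈ Finset.range n, x < |ξ i ω|
  · obtain ⟨i, hi, hxi⟩ := hbig
    exact Or.inl (Set.mem_biUnion hi hxi)
  · simp only [not_exists, not_and, not_lt] at hbig
    right
    simpa [walk, Finset.sum_congr rfl fun i hi => cutoff_of_abs_le (hbig i hi)] using hω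

section Walk

variable {Ω : Type*} [MeasurableSpace Ω] {μ : Measure Ω}

lemma measureReal_walk_lt_le [IsFiniteMeasure μ] {ξ : ℕ → Ω → ℝ}
    (hident : ∀ i, IdentDistrib (ξ i) (ξ 0) μ μ) (n : ℕ) (x : ℝ) :
    μ.real {ω | x < walk ξ n ω} ≤ n * μ.real {ω | x < |ξ 0 ω|} +
      μ.real {ω | x < ∑ i ∈ Finset.range n, cutoff x (ξ i ω)} := by
  have hident_tail (i : ℕ) : μ.real {ω | x < |ξ i ω|} = μ.real {ω | x < |ξ 0 ω|} :=
    congrArg ENNReal.toReal <|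
      (hident i).measure_mem_eq (s := {y | x < |y|})
        (measurableSet_lt measurable_const measurable_abs)
  calc μ.real {ω | x < walk ξ n ω}
      ≤ ∑ i ∈ Finset.range n, μ.real {ω | x < |ξ i ω|} +
          μ.real {ω | x < ∑ i ∈ Finset.range n, cutoff x (ξ i ω)} :=
        (measureReal_mono (walk_lt_subset ξ n x)).trans <| (measureReal_union_le _ _).trans <|
          add_le_add_left (measureReal_biUnion_finset_le _ _) _
    _ = n * μ.real {ω | x < |ξ 0 ω|} +
          μ.real {ω | x < ∑ i ∈ Finset.range n, cutoff x (ξ i ω)} := by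
        simp [hident_tail]

end Walk

section Truncated

variable {Ω : Type*} [MeasurableSpace Ω] {P : Measure Ω} [IsProbabilityMeasure P]
  {ξ : ℕ → Ω → ℝ}

lemma measureReal_sum_cutoff_lt_le (hmeas : ∀ i, Measurable (ξ i)) (hindep : iIndepFun ξ P)
    (hident : ∀ i, IdentDistrib (ξ i) (ξ 0) P P) {x : ℝ} (hx : 0 < x) (n : ℕ)
    (hmean : 2 * n * |∫ ω in {ω | |ξ 0 ω| ≤ x}, ξ 0 ω ∂P| ≤ x) :
    P.real {ω | x < ∑ i ∈ Finset.range n, cutoff x (ξ i ω)} ≤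
      4 * n * (∫ ω in {ω | |ξ 0 ω| ≤ x}, ξ 0 ω ^ 2 ∂P) / x ^ 2 := by
  set η : ℕ → Ω → ℝ := fun i ω => cutoff x (ξ i ω)
  have hη_meas : Measurable (η 0) := measurable_cutoff.comp (hmeas 0)
  have hη_memLp : MemLp (η 0) 2 P := MemLp.of_bound hη_meas.aestronglyMeasurable x
    (.of_forall fun ω => abs_cutoff_le hx.le _)
  have hη_ident (i : ℕ) : IdentDistrib (η i) (η 0) P P := (hident i).comp measurable_cutoff
  have hη_indep : iIndepFun η P := hindep.comp (fun _ => cutoff x) fun _ => measurable_cutoff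
  have hη_integral : ∫ ω, η 0 ω ∂P = ∫ ω in {ω | |ξ 0 ω| ≤ x}, ξ 0 ω ∂P :=
    integral_comp_cutoff (g := id) rfl (hmeas 0)
  have hmean_sum : ∫ ω, ∑ i ∈ Finset.range n, η i ω ∂P + x / 2 ≤ x := by
    rw [integral_sum_range_of_identDistrib (hη_memLp.integrable one_le_two) hη_ident,
      hη_integral]
    linarith [mul_le_mul_of_nonneg_left (le_abs_self (∫ ω in {ω | |ξ 0 ω| ≤ x}, ξ 0 ω ∂P))
      n.cast_nonneg]
  have hvar : variance (η 0) P ≤ ∫ ω in {ω | |ξ 0 ω| ≤ x}, ξ 0 ω ^ 2 ∂P :=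
    (variance_le_expectation_sq hη_meas.aestronglyMeasurable).trans_eq
      (integral_comp_cutoff (g := (· ^ 2)) (zero_pow two_ne_zero) (hmeas 0))
  calc P.real {ω | x < ∑ i ∈ Finset.range n, η i ω}
      ≤ variance (fun ω => ∑ i ∈ Finset.range n, η i ω) P / (x / 2) ^ 2 :=
        measureReal_lt_le_variance_div_sq (memLp_finsetSum _ fun i _ =>
          (hη_ident i).memLp_iff.mpr hη_memLp) (by positivity) hmean_sum
    _ = 4 * n * variance (η 0) P / x ^ 2 := by
        rw [variance_sum_range_of_iIndepFun hη_memLp hη_indep hη_ident]; ring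
    _ ≤ 4 * n * (∫ ω in {ω | |ξ 0 ω| ≤ x}, ξ 0 ω ^ 2 ∂P) / x ^ 2 := by gcongr

lemma measureReal_sum_cutoff_lt_le_of_moment_bounds (hmeas : ∀ i, Measurable (ξ i))
    (hindep : iIndepFun ξ P) (hident : ∀ i, IdentDistrib (ξ i) (ξ 0) P P) {x A C₁ C₂ : ℝ}
    (hx : 0 < x) (hA : 0 < A) (n : ℕ)
    (hvar : ∫ ω in {ω | |ξ 0 ω| ≤ x}, ξ 0 ω ^ 2 ∂P ≤ C₁ * x ^ 2 / A)
    (hmean : |∫ ω in {ω | |ξ 0 ω| ≤ x}, ξ 0 ω ∂P| ≤ C₂ * x / A) :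
    P.real {ω | x < ∑ i ∈ Finset.range n, cutoff x (ξ i ω)} ≤
      (4 * |C₁| + 2 * |C₂|) * n / A := by
  by_cases hsmall : 2 * n * |C₂| ≤ A
  · have hmean_small : 2 * n * |∫ ω in {ω | |ξ 0 ω| ≤ x}, ξ 0 ω ∂P| ≤ x :=
      calc 2 * n * |∫ ω in {ω | |ξ 0 ω| ≤ x}, ξ 0 ω ∂P|
          ≤ 2 * n * (|C₂| * x / A) := by
            gcongr; exact hmean.trans (by gcongr; exact le_abs_self _)
        _ = 2 * n * |C₂| / A * x := by ring
        _ ≤ x := mul_le_of_le_one_left hx.le ((div_le_one hA).mpr hsmall)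
    calc P.real {ω | x < ∑ i ∈ Finset.range n, cutoff x (ξ i ω)}
        ≤ 4 * n * (∫ ω in {ω | |ξ 0 ω| ≤ x}, ξ 0 ω ^ 2 ∂P) / x ^ 2 :=
          measureReal_sum_cutoff_lt_le hmeas hindep hident hx n hmean_small
      _ ≤ 4 * n * (|C₁| * x ^ 2 / A) / x ^ 2 := by
          gcongr; exact hvar.trans (by gcongr; exact le_abs_self _)
      _ = 4 * |C₁| * n / A := by field_simp
      _ ≤ (4 * |C₁| + 2 * |C₂|) * n / A := by gcongr; linarith [abs_nonneg C₂]
  · calc P.real {ω | x < ∑ i ∈ Finset.range n, cutoff x (ξ i ω)} ≤ 1 := measureReal_le_one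
      _ ≤ 2 * |C₂| * n / A := (one_le_div hA).mpr (by linarith)
      _ ≤ (4 * |C₁| + 2 * |C₂|) * n / A := by gcongr; linarith [abs_nonneg C₁]

end Truncated

theorem large_deviation_upper_bound_general
    {Ω : Type*} [MeasurableSpace Ω] (P : Measure Ω) [IsProbabilityMeasure P]
    (ξ : ℕ → Ω → ℝ) (hmeas : ∀ i, Measurable (ξ i))
    (hindep : iIndepFun ξ P)
    (hident : ∀ i, IdentDistrib (ξ i) (ξ 0) P P)
    (ainv : ℝ → ℝ)
    (hainv_maps : ∀ y : ℝ, 1 ≤ y → 1 ≤ ainv y)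
    (C₀ C₁ C₂ : ℝ)
    (htail : ∀ x : ℝ, 1 ≤ x →
      ainv x * (P {ω | x < ξ 0 ω}).toReal ≤ C₀ ∧
      ainv x * (P {ω | ξ 0 ω < -x}).toReal ≤ C₀)
    (hvar : ∀ z : ℝ, 1 ≤ z →
      ∫ ω in {ω | |ξ 0 ω| ≤ z}, (ξ 0 ω) ^ 2 ∂P ≤ C₁ * z ^ 2 / ainv z)
    (hmean : ∀ z : ℝ, 1 ≤ z →
      |∫ ω in {ω | |ξ 0 ω| ≤ z}, ξ 0 ω ∂P| ≤ C₂ * z / ainv z) :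
    ∃ C : ℝ, ∀ n : ℕ, 1 ≤ n → ∀ x : ℝ, 1 ≤ x →
      (P {ω | x < walk ξ n ω}).toReal ≤ C * n / ainv x := by
  refine ⟨2 * C₀ + 4 * |C₁| + 2 * |C₂|, fun n _ x hx => ?_⟩
  have hA : 0 < ainv x := by linarith [hainv_maps x hx]
  have hx0 : 0 < x := by linarith
  have h_abs_tail : P.real {ω | x < |ξ 0 ω|} ≤ 2 * C₀ / ainv x := by
    have h_right := (le_div_iff₀' hA).mpr (htail x hx).1
    have h_left := (le_div_iff₀' hA).mpr (htail x hx).2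
    calc P.real {ω | x < |ξ 0 ω|}
        ≤ P.real {ω | x < ξ 0 ω} + P.real {ω | ξ 0 ω < -x} := measureReal_lt_abs_le (ξ 0) x
      _ ≤ C₀ / ainv x + C₀ / ainv x := add_le_add h_right h_left
      _ = 2 * C₀ / ainv x := by ring
  have h_trunc := measureReal_sum_cutoff_lt_le_of_moment_bounds hmeas hindep hident hx0 hA n
    (hvar x hx) (hmean x hx)
  calc (P {ω | x < walk ξ n ω}).toReal
      ≤ n * P.real {ω | x < |ξ 0 ω|} + P.real {ω | x < ∑ i ∈ Finset.range n, cutoff x (ξ i ω)} :=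
        measureReal_walk_lt_le hident n x
    _ ≤ n * (2 * C₀ / ainv x) + (4 * |C₁| + 2 * |C₂|) * n / ainv x := by gcongr
    _ = (2 * C₀ + 4 * |C₁| + 2 * |C₂|) * n / ainv x := by ring

/-- Let `a : [1,∞) → [1,∞)` be continuous, strictly increasing,
unbounded, `a(1) = 1`, with inverse `a⁻¹` regularly varying with index `α ∈ (0,2]`.
Assume (i) `a⁻¹(x) P(ξ₁ > x) ≤ C₀` and `a⁻¹(x) P(ξ₁ < -x) ≤ C₀` for `x ≥ 1`;
(ii) `E[ξ₁² 1_{|ξ₁|≤z}] ≤ C₁ z²/a⁻¹(z)` for `z ≥ 1`;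
(iii) `|E[ξ₁ 1_{|ξ₁|≤z}]| ≤ C₂ z/a⁻¹(z)` for `z ≥ 1`.
Then there is `C` with `P(S_n > x) ≤ C n / a⁻¹(x)` for all `n ≥ 1`, `x ≥ 1`. -/
theorem large_deviation_upper_bound
    {Ω : Type*} [MeasurableSpace Ω] (P : Measure Ω) [IsProbabilityMeasure P]
    (ξ : ℕ → Ω → ℝ) (hmeas : ∀ i, Measurable (ξ i))
    (hindep : iIndepFun ξ P)
    (hident : ∀ i, IdentDistrib (ξ i) (ξ 0) P P)
    (a ainv : ℝ → ℝ) (α : ℝ) (hα : 0 < α) (hα2 : α ≤ 2)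
    (ha_cont : ContinuousOn a (Set.Ici 1))
    (ha_mono : StrictMonoOn a (Set.Ici 1))
    (ha_top : Tendsto a atTop atTop)
    (ha_one : a 1 = 1)
    (ha_maps : ∀ x : ℝ, 1 ≤ x → 1 ≤ a x)
    (hainv_left : ∀ x : ℝ, 1 ≤ x → ainv (a x) = x)
    (hainv_right : ∀ y : ℝ, 1 ≤ y → a (ainv y) = y)
    (hainv_maps : ∀ y : ℝ, 1 ≤ y → 1 ≤ ainv y)
    (hainv_rv : ∀ l : ℝ, 0 < l →
      Tendsto (fun x : ℝ => ainv (l * x) / ainv x) atTop (nhds (l ^ α)))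
    (C₀ C₁ C₂ : ℝ)
    (htail : ∀ x : ℝ, 1 ≤ x →
      ainv x * (P {ω | x < ξ 0 ω}).toReal ≤ C₀ ∧
      ainv x * (P {ω | ξ 0 ω < -x}).toReal ≤ C₀)
    (hvar : ∀ z : ℝ, 1 ≤ z →
      ∫ ω in {ω | |ξ 0 ω| ≤ z}, (ξ 0 ω) ^ 2 ∂P ≤ C₁ * z ^ 2 / ainv z)
    (hmean : ∀ z : ℝ, 1 ≤ z →
      |∫ ω in {ω | |ξ 0 ω| ≤ z}, ξ 0 ω ∂P| ≤ C₂ * z / ainv z) :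
    ∃ C : ℝ, ∀ n : ℕ, 1 ≤ n → ∀ x : ℝ, 1 ≤ x →
      (P {ω | x < walk ξ n ω}).toReal ≤ C * n / ainv x :=
  large_deviation_upper_bound_general P ξ hmeas hindep hident ainv hainv_maps C₀ C₁ C₂ htail hvar
    hmean
end
end

section
/- For every real α with 1 < α ≤ 2 and every real q ≥ 0: (α−1)·∫₀¹ E_α(q·(1−x)^α)·x^{α−2} dx = Γ(α+1)·E_α′(q). -/
/-!
Expanding `E_α(q(1-x)^α)` and integrating termwise against `x^(α-2)`, the `n`-th term becomes
`qⁿ / Γ(αn+1) · B(α-1, αn+1) = Γ(α-1) qⁿ / Γ(α(n+1))`, and the interchange is justified because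
the Beta integrands are nonnegative and `Σ |q|ⁿ / Γ(α(n+1))` converges. The `n`-th term of `Γ(α+1) E_α′(q)` simplifies, by
`Γ(s+1) = s Γ(s)`, to `Γ(α) qⁿ / Γ(α(n+1))`, and `Γ(α) = (α-1) Γ(α-1)`.
-/

open MeasureTheory Set

noncomputable section

/-- The Mittag-Leffler function `E_α(x) = Σ_{n=0}^∞ xⁿ / Γ(αn+1)`. -/
def mittagLeffler (α x : ℝ) : ℝ :=
  ∑' n : ℕ, x ^ n / Real.Gamma (α * n + 1)

/-- The termwise derivative of the Mittag-Leffler function,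
`E_α′(x) = Σ_{n=1}^∞ n xⁿ⁻¹ / Γ(αn+1) = Σ_{n=0}^∞ (n+1) xⁿ / Γ(α(n+1)+1)`. -/
def mittagLefflerDeriv (α x : ℝ) : ℝ :=
  ∑' n : ℕ, (n + 1 : ℝ) * x ^ n / Real.Gamma (α * (n + 1) + 1)

namespace Real

lemma ofReal_rpow_mul_one_sub_rpow {x : ℝ} (hx : x ∈ uIcc (0 : ℝ) 1) (a b : ℝ) :
    ((x ^ (a - 1) * (1 - x) ^ (b - 1) : ℝ) : ℂ)
      = (x : ℂ) ^ ((a : ℂ) - 1) * (1 - (x : ℂ)) ^ ((b : ℂ) - 1) := by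
  rw [uIcc_of_le zero_le_one] at hx
  rw [Complex.ofReal_mul, Complex.ofReal_cpow hx.1, Complex.ofReal_cpow (sub_nonneg.2 hx.2)]
  push_cast
  ring

theorem intervalIntegrable_rpow_mul_one_sub_rpow {a b : ℝ} (ha : 0 < a) (hb : 0 < b) :
    IntervalIntegrable (fun x ↦ x ^ (a - 1) * (1 - x) ^ (b - 1)) volume 0 1 := by
  refine (Complex.betaIntegral_convergent (u := a) (v := b) (by simpa) (by simpa)).mono_fun
    (by fun_prop) ((ae_restrict_mem measurableSet_uIoc).mono fun x hx ↦ ?_)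
  dsimp only
  rw [← ofReal_rpow_mul_one_sub_rpow (uIoc_subset_uIcc hx), Complex.norm_real]

theorem integral_rpow_mul_one_sub_rpow {a b : ℝ} (ha : 0 < a) (hb : 0 < b) :
    ∫ x in (0 : ℝ)..1, x ^ (a - 1) * (1 - x) ^ (b - 1) = Gamma a * Gamma b / Gamma (a + b) := by
  have h := Complex.Gamma_mul_Gamma_eq_betaIntegral (s := a) (t := b) (by simpa) (by simpa)
  rw [Complex.betaIntegral, ← intervalIntegral.integral_congr
      (fun x hx ↦ ofReal_rpow_mul_one_sub_rpow hx a b),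
    intervalIntegral.integral_ofReal, ← Complex.ofReal_add, Complex.Gamma_ofReal,
    Complex.Gamma_ofReal, Complex.Gamma_ofReal] at h
  rw [eq_div_iff (Gamma_pos_of_pos (add_pos ha hb)).ne']
  exact_mod_cast (mul_comm _ _).trans h.symm

/-- Beyond `n = 1` the terms are dominated by `|x|ⁿ / n!`, since `Γ` increases on `[2, ∞)`. -/
theorem summable_pow_div_Gamma_mul_add_one {α : ℝ} (hα : 1 ≤ α) (x : ℝ) :
    Summable fun n : ℕ ↦ x ^ n / Gamma (α * (n + 1)) := by
  refine .of_norm_bounded_eventually_nat (summable_pow_div_factorial |x|) ?_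
  filter_upwards [Filter.eventually_ge_atTop 1] with n hn
  have hn' : (1 : ℝ) ≤ n := by exact_mod_cast hn
  have hfact : (n.factorial : ℝ) ≤ Gamma (α * (n + 1)) := by
    rw [← Gamma_nat_eq_factorial]
    exact Gamma_strictMonoOn_Ici.monotoneOn (by simp; linarith) (by simp; nlinarith) (by nlinarith)
  rw [norm_div, norm_pow, norm_eq_abs, norm_of_nonneg (by positivity)]
  gcongr

end Real

theorem MeasureTheory.integral_tsum_mul_of_nonneg {X ι : Type*} [MeasurableSpace X] [Countable ι]
    {μ : Measure X} {c : ι → ℝ} {φ : ι → X → ℝ} (hφ : ∀ i, 0 ≤ᵐ[μ] φ i)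
    (hφ_int : ∀ i, Integrable (φ i) μ) (h_sum : Summable fun i ↦ |c i| * ∫ x, φ i x ∂μ) :
    ∫ x, ∑' i, c i * φ i x ∂μ = ∑' i, c i * ∫ x, φ i x ∂μ := by
  have h_norm (i : ι) : ∫ x, ‖c i * φ i x‖ ∂μ = |c i| * ∫ x, φ i x ∂μ := by
    rw [← integral_const_mul]
    refine integral_congr_ae ((hφ i).mono fun x hx ↦ ?_)
    dsimp only
    rw [norm_mul, Real.norm_eq_abs, Real.norm_of_nonneg hx]
  simp_rw [← integral_const_mul]
  exact (integral_tsum_of_summable_integral_norm (fun i ↦ (hφ_int i).const_mul (c i))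
    (by simpa only [h_norm] using h_sum)).symm

lemma mittagLeffler_mul_rpow (α q : ℝ) {y : ℝ} (hy : 0 ≤ y) :
    mittagLeffler α (q * y ^ α) = ∑' n : ℕ, q ^ n / Real.Gamma (α * n + 1) * y ^ (α * n) := by
  refine tsum_congr fun n ↦ ?_
  rw [mul_pow, ← Real.rpow_natCast (y ^ α), ← Real.rpow_mul hy]
  ring

theorem integral_mittagLeffler_mul_rpow {α : ℝ} (hα : 1 < α) (q : ℝ) :
    ∫ x in (0 : ℝ)..1, mittagLeffler α (q * (1 - x) ^ α) * x ^ (α - 2)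
      = Real.Gamma (α - 1) * ∑' n : ℕ, q ^ n / Real.Gamma (α * (n + 1)) := by
  set φ : ℕ → ℝ → ℝ := fun n x ↦ x ^ (α - 1 - 1) * (1 - x) ^ (α * n + 1 - 1)
  have ha : 0 < α - 1 := by linarith
  have hb (n : ℕ) : 0 < α * n + 1 := by positivity
  have hexpand : EqOn (fun x ↦ mittagLeffler α (q * (1 - x) ^ α) * x ^ (α - 2))
      (fun x ↦ ∑' n : ℕ, q ^ n / Real.Gamma (α * n + 1) * φ n x) (Ioc 0 1) := fun x hx ↦ by
    dsimp only
    rw [mittagLeffler_mul_rpow α q (sub_nonneg.2 hx.2), ← tsum_mul_right]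
    refine tsum_congr fun n ↦ ?_
    simp only [φ]
    ring_nf
  have hφ_int (n : ℕ) : IntegrableOn (φ n) (Ioc 0 1) :=
    (intervalIntegrable_iff_integrableOn_Ioc_of_le zero_le_one).1
      (Real.intervalIntegrable_rpow_mul_one_sub_rpow ha (hb n))
  have hφ_nonneg (n : ℕ) : 0 ≤ᵐ[volume.restrict (Ioc 0 1)] φ n :=
    (ae_restrict_mem measurableSet_Ioc).mono fun x hx ↦
      mul_nonneg (Real.rpow_nonneg hx.1.le _) (Real.rpow_nonneg (sub_nonneg.2 hx.2) _)
  have hφ (r : ℝ) (n : ℕ) : r ^ n / Real.Gamma (α * n + 1) * ∫ x in Ioc 0 1, φ n x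
      = Real.Gamma (α - 1) * (r ^ n / Real.Gamma (α * (n + 1))) := by
    rw [← intervalIntegral.integral_of_le zero_le_one,
      Real.integral_rpow_mul_one_sub_rpow ha (hb n), show α - 1 + (α * n + 1) = α * (n + 1) by ring]
    field_simp [(Real.Gamma_pos_of_pos (hb n)).ne']
  have h_sum : Summable fun n : ℕ ↦ |q ^ n / Real.Gamma (α * n + 1)| * ∫ x in Ioc 0 1, φ n x := by
    simp only [abs_div, abs_pow, abs_of_pos (Real.Gamma_pos_of_pos (hb _)), hφ]
    exact (Real.summable_pow_div_Gamma_mul_add_one hα.le |q|).mul_left _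
  rw [intervalIntegral.integral_of_le zero_le_one, setIntegral_congr_fun measurableSet_Ioc hexpand,
    integral_tsum_mul_of_nonneg hφ_nonneg hφ_int h_sum, ← tsum_mul_left]
  exact tsum_congr (hφ q)

lemma Gamma_add_one_mul_mittagLefflerDeriv {α : ℝ} (hα : 0 < α) (q : ℝ) :
    Real.Gamma (α + 1) * mittagLefflerDeriv α q
      = Real.Gamma α * ∑' n : ℕ, q ^ n / Real.Gamma (α * (n + 1)) := by
  rw [mittagLefflerDeriv, ← tsum_mul_left, ← tsum_mul_left]
  refine tsum_congr fun n ↦ ?_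
  have hn : 0 < α * (n + 1) := by positivity
  rw [Real.Gamma_add_one hα.ne', Real.Gamma_add_one hn.ne']
  field_simp [(Real.Gamma_pos_of_pos hn).ne']

theorem mittagLeffler_integral_identity_general
    (α q : ℝ) (hα₁ : 1 < α) :
    (α - 1) * ∫ x in (0 : ℝ)..1, mittagLeffler α (q * (1 - x) ^ α) * x ^ (α - 2)
      = Real.Gamma (α + 1) * mittagLefflerDeriv α q := by
  rw [integral_mittagLeffler_mul_rpow hα₁, Gamma_add_one_mul_mittagLefflerDeriv (by linarith),
    ← mul_assoc, ← Real.Gamma_add_one (by linarith), sub_add_cancel]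

/-- For `1 < α ≤ 2` and `q ≥ 0`:
`(α-1) ∫₀¹ E_α(q (1-x)^α) x^(α-2) dx = Γ(α+1) E_α′(q)`. -/
theorem mittagLeffler_integral_identity
    (α q : ℝ) (hα₁ : 1 < α) (hα₂ : α ≤ 2) (hq : 0 ≤ q) :
    (α - 1) * ∫ x in (0 : ℝ)..1, mittagLeffler α (q * (1 - x) ^ α) * x ^ (α - 2)
      = Real.Gamma (α + 1) * mittagLefflerDeriv α q :=
  mittagLeffler_integral_identity_general α q hα₁
end
end
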